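/- arXiv:2510.24451 — 7 statements merged into one kernel-verified Lean document; each statement's English description precedes it below -/
import Mathlib

section
/- For every i ∈ {1, …, m+n−1} with i ≠ m and every c ∈ M_{▵_i}, the tableau 𝙿_i(c) equals the subtableau of κ(c) consisting of all boxes whose entries are greater than or equal to i+2. -/
/-- `a` is one of the letters of `𝕀 = {1, …, m+n}`; the letter `a` is even iff `a ≤ m`. -/
def IsLetter (m n a : ℕ) : Prop := 1 ≤ a ∧ a ≤ m + n

/-- A column, read from top to bottom: entries weakly increase, and even letters
(`a ≤ m`) appear at most once. -/
def ColOK (m : ℕ) (C : List ℕ) : Prop :=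
  C.Chain' fun a b => a ≤ b ∧ (a = b → m < a)

/-- The entry of a column at height `h` from the bottom (`0` if out of range). -/
def ebot (C : List ℕ) (h : ℕ) : ℕ := C.reverse.getD h 0

/-- Compatibility between a column `C` and the column `D` directly to its left
(columns are bottom-justified): `D` is not longer than `C`, rows weakly increase from
left to right, and odd letters (`> m`) appear at most once in each row. -/
def AdjOK (m : ℕ) (C D : List ℕ) : Prop :=
  D.length ≤ C.length ∧
    ∀ h < D.length, ebot D h ≤ ebot C h ∧ (ebot D h = ebot C h → ebot D h ≤ m)

/-- `T` is an `𝕀`-semistandard tableau of rotated partition shape `δ^π`; the columns of `T`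
are listed from the rightmost (the longest) to the leftmost, each read from top to bottom. -/
def SSTrot (m n : ℕ) (T : List (List ℕ)) : Prop :=
  (∀ C ∈ T, C ≠ [] ∧ ColOK m C ∧ ∀ a ∈ C, IsLetter m n a) ∧ List.Chain' (AdjOK m) T

/-- The shape of `T` is an `(m|n)`-hook partition: at most `n` columns have length `> m`. -/
def Hook (m n : ℕ) (T : List (List ℕ)) : Prop := ∀ C ∈ T.drop n, C.length ≤ m

/-- `T ∈ V^{d_{m|n}}`: an `𝕀`-semistandard tableau of shape `δ^π` for an `(m|n)`-hook
partition `δ` all of whose column lengths are even. -/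
def Vd (m n : ℕ) (T : List (List ℕ)) : Prop :=
  SSTrot m n T ∧ Hook m n T ∧ ∀ C ∈ T, Even C.length

/-- The position (index from the top) of the entry bumped out when `a` is inserted into the
column `C` by reverse column insertion: the bottommost entry `≤ a` if `a` is even,
resp. `< a` if `a` is odd; `none` if no entry is bumped. -/
def bumpIdx (m a : ℕ) (C : List ℕ) : Option ℕ :=
  (List.range C.length).reverse.find? fun t =>
    if a ≤ m then decide (C.getD t 0 ≤ a) else decide (C.getD t 0 < a)

/-- Reverse Schensted column insertion of `a`, starting from the rightmost column:
returns the new tableau together with the index of the column where a new box was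
created (on top of that column). -/
def insertAux (m : ℕ) : ℕ → List (List ℕ) → List (List ℕ) × ℕ
  | a, [] => ([[a]], 0)
  | a, C :: rest =>
    match bumpIdx m a C with
    | none => ((a :: C) :: rest, 0)
    | some t =>
      let r := insertAux m (C.getD t 0) rest
      (C.set t a :: r.1, r.2 + 1)

/-- `T ← a`, reverse Schensted column insertion. -/
def colIns (m : ℕ) (T : List (List ℕ)) (a : ℕ) : List (List ℕ) := (insertAux m a T).1

/-- `T ←B (i,j)`: Burge insertion, obtained from `T ← j` by adding a box filled with `i`
directly above the unique new box of `T ← j`. -/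
def burgeIns (m : ℕ) (T : List (List ℕ)) (p : ℕ × ℕ) : List (List ℕ) :=
  let r := insertAux m p.2 T
  r.1.set r.2 (p.1 :: r.1.getD r.2 [])

/-- All biletters `(i,j)` with `1 ≤ i ≤ j ≤ m+n`, listed in increasing order with respect
to the order `<'`: `(i,j) <' (k,l)` iff `i < k`, or `i = k ≤ m` and `j > l`, or
`i = k > m` and `j < l`. -/
def biletters (m n : ℕ) : List (ℕ × ℕ) :=
  ((List.range' 1 (m + n)).map fun i =>
    if i ≤ m then ((List.range' i (m + n + 1 - i)).map fun j => (i, j)).reverse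
    else (List.range' i (m + n + 1 - i)).map fun j => (i, j)).flatten

/-- The biword of `c`: each biletter `(i,j)` occurs exactly `c (i,j)` times, in increasing
order with respect to `<'`. -/
def biword (m n : ℕ) (c : ℕ × ℕ → ℕ) : List (ℕ × ℕ) :=
  ((biletters m n).map fun p => List.replicate (c p) p).flatten

/-- The Burge correspondence: `κ(c) = ((D ←B (i_{r−1},j_{r−1})) ←B ⋯ ←B (i_1,j_1))`,
the iterated Burge insertion of the biword of `c` (starting from the empty tableau;
note that inserting the last biletter into the empty tableau produces exactly the
vertical domino with `i_r` above `j_r`). -/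
def kappa (m n : ℕ) (c : ℕ × ℕ → ℕ) : List (List ℕ) :=
  (biword m n c).foldr (fun p T => burgeIns m T p) []

/-- `c ∈ M^{d_{m|n}}`: an array `(c_{ij})_{1 ≤ i ≤ j ≤ m+n}` with `c_{ij} ∈ {0,1}` when
`i, j` have different parities and `c_{ii} = 0` for even `i`. -/
def Md (m n : ℕ) (c : ℕ × ℕ → ℕ) : Prop :=
  (∀ p : ℕ × ℕ, c p ≠ 0 → 1 ≤ p.1 ∧ p.1 ≤ p.2 ∧ p.2 ≤ m + n) ∧
  (∀ i j : ℕ, i ≤ m → m < j → c (i, j) ≤ 1) ∧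
  ∀ i : ℕ, i ≤ m → c (i, i) = 0

open scoped Classical

/-- Membership in `▵_i = {(k,l) : i ≤ k ≤ l ≤ m+n}`. -/
def BTset (m n i : ℕ) (p : ℕ × ℕ) : Prop := i ≤ p.1 ∧ p.1 ≤ p.2 ∧ p.2 ≤ m + n

/-- Membership in `△_i`. -/
def TriSet (m i : ℕ) (p : ℕ × ℕ) : Prop :=
  if i < m then p = (i, i + 1)
  else if i = m then p = (i, i + 1) ∨ p = (i + 1, i + 1)
  else p = (i, i) ∨ p = (i, i + 1) ∨ p = (i + 1, i + 1)

/-- Membership in `◊_i = ▵_i ∖ (△_i ∪ ▵_{i+2})`. -/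
def DiaSet (m n i : ℕ) (p : ℕ × ℕ) : Prop :=
  BTset m n i p ∧ ¬ TriSet m i p ∧ ¬ BTset m n (i + 2) p

/-- The restriction `c_X` of `c` to a set `X` of positions (zero elsewhere). -/
noncomputable def cRes (S : ℕ × ℕ → Prop) (c : ℕ × ℕ → ℕ) : ℕ × ℕ → ℕ :=
  fun p => if S p then c p else 0

/-- `𝙿(T, c') = ((T ← b_s) ← ⋯ ← b_1)`, where `(a_1⋯a_s, b_1⋯b_s)` is the biword of `c'`. -/
def PtabOf (m n : ℕ) (T : List (List ℕ)) (c : ℕ × ℕ → ℕ) : List (List ℕ) :=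
  (biword m n c).foldr (fun p S => colIns m S p.2) T

/-- `𝙿_i(c) = 𝙿(κ(c_{▵_{i+2}}), c_{◊_i})`. -/
noncomputable def PtabI (m n i : ℕ) (c : ℕ × ℕ → ℕ) : List (List ℕ) :=
  PtabOf m n (kappa m n (cRes (BTset m n (i + 2)) c)) (cRes (DiaSet m n i) c)

/-- The subtableau of `T` consisting of all boxes with entries `≥ v`. -/
def geSub (v : ℕ) (T : List (List ℕ)) : List (List ℕ) :=
  (T.map fun C => C.filter fun a => decide (v ≤ a)).filter fun C => !C.isEmpty

/-! Write `v = i + 2`. The biword of `c` lists the biletters with first letter `< v` before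
those of `c_{▵_v}`, so `κ(c)` arises from `κ(c_{▵_v})`, all of whose entries are `≥ v`, by
Burge-inserting the former. Restricting to the entries `≥ v` commutes with reverse column
insertion: a letter `< v` only bumps letters `< v` and leaves that part unchanged, while a letter
`≥ v` acts on it by insertion, as long as columns are sorted and the columns meeting `[v, ∞)`
come first. The box `p.1 < v` added by a Burge insertion is invisible above `v`. Hence the part
`≥ v` of `κ(c)` is `κ(c_{▵_v})` with the second letters `≥ v` of the low biletters inserted, and
on the support of `c` these biletters are exactly those of `◊_i`. -/

lemma List.forall_eq_false_or_eq_append_cons {α : Type*} (p : α → Bool) (l : List α) :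
    (∀ x ∈ l, p x = false) ∨ ∃ H b N, l = H ++ b :: N ∧ p b ∧ ∀ x ∈ N, p x = false := by
  induction l with
  | nil => simp
  | cons y l ih =>
    rcases ih with hl | ⟨H, b, N, rfl, hb, hN⟩
    · cases hy : p y
      · exact Or.inl (by simpa [hy] using hl)
      · exact Or.inr ⟨[], y, l, rfl, hy, hl⟩
    · exact Or.inr ⟨y :: H, b, N, rfl, hb, hN⟩

lemma List.map_set_of_apply_eq {α β : Type*} {f : α → β} {l : List α} {r : ℕ} {x d : α}
    (h : f x = f (l.getD r d)) : (l.set r x).map f = l.map f := by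
  rw [List.map_set]
  by_cases hr : r < l.length
  · rw [h, List.getD_eq_getElem _ _ hr, ← List.getElem_map (f := f) (h := by simpa using hr),
      List.set_getElem_self]
  · exact List.set_eq_of_length_le (by simpa using hr)

lemma List.filter_append_filter_not_of_pairwise {α : Type*} {P : α → Bool} {l : List α}
    (h : l.Pairwise fun x y => P y → P x) : l.filter P ++ l.filter (fun x => !P x) = l := by
  induction l with
  | nil => rfl
  | cons x l ih =>
    rw [List.pairwise_cons] at h
    cases hx : P x
    · have hl : ∀ y ∈ l, P y = false := fun y hy => by
        by_contra hy'
        simpa [hx] using h.1 y hy (by simpa using hy')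
      have h1 : l.filter P = [] := List.filter_eq_nil_iff.mpr fun y hy => by simp [hl y hy]
      have h2 : l.filter (fun x => !P x) = l :=
        List.filter_eq_self.mpr fun y hy => by simp [hl y hy]
      simp [hx, h1, h2]
    · simp [hx, ih h.2]

lemma List.pairwise_flatMap_of_fst_eq {α : Type*} {l : List ℕ} {f : ℕ → List (ℕ × α)}
    (hl : l.Pairwise (· ≤ ·)) (hf : ∀ i ∈ l, ∀ p ∈ f i, p.1 = i) :
    (l.flatMap f).Pairwise fun p q => p.1 ≤ q.1 := by
  rw [List.pairwise_flatMap]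
  refine ⟨fun i hi => List.pairwise_of_forall_mem_list fun p hp q hq => ?_,
    hl.imp_of_mem fun hi hj hij p hp q hq => ?_⟩
  · rw [hf i hi p hp, hf i hi q hq]
  · rw [hf _ hi p hp, hf _ hj q hq]; exact hij

def bumps (m a x : ℕ) : Bool := if a ≤ m then decide (x ≤ a) else decide (x < a)

lemma le_of_bumps {m a x : ℕ} (h : bumps m a x) : x ≤ a := by
  unfold bumps at h; split at h <;> simp at h <;> omega

lemma le_of_not_bumps {m a x : ℕ} (h : bumps m a x = false) : a ≤ x := by
  unfold bumps at h; split at h <;> simp at h <;> omega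

lemma bumpIdx_eq_find? (m a : ℕ) (C : List ℕ) :
    bumpIdx m a C = (List.range C.length).reverse.find? fun t => bumps m a (C.getD t 0) := rfl

lemma bumpIdx_append (m a : ℕ) (A B : List ℕ) :
    bumpIdx m a (A ++ B) = ((bumpIdx m a B).map (A.length + ·)).or (bumpIdx m a A) := by
  simp only [bumpIdx_eq_find?, List.length_append, List.range_add, List.reverse_append,
    ← List.map_reverse, List.find?_append, List.find?_map]
  congr 1
  · congr 1
    refine List.find?_congr fun t _ => ?_
    rw [Function.comp_apply, List.getD_append_right _ _ _ _ (Nat.le_add_right _ t),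
      Nat.add_sub_cancel_left]
  · refine List.find?_congr fun t ht => ?_
    simp only [List.mem_reverse, List.mem_range] at ht
    rw [List.getD_append _ _ _ _ ht]

lemma bumpIdx_eq_none {m a : ℕ} {C : List ℕ} (h : ∀ x ∈ C, bumps m a x = false) :
    bumpIdx m a C = none := by
  rw [bumpIdx_eq_find?, List.find?_eq_none]
  intro t ht
  simp only [List.mem_reverse, List.mem_range] at ht
  rw [List.getD_eq_getElem _ _ ht]
  simpa using h _ (List.getElem_mem ht)

lemma bumpIdx_cons_of_bumps {m a b : ℕ} {N : List ℕ} (hb : bumps m a b)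
    (hN : ∀ x ∈ N, bumps m a x = false) : bumpIdx m a (b :: N) = some 0 := by
  rw [← List.singleton_append, bumpIdx_append, bumpIdx_eq_none hN]
  simp [bumpIdx_eq_find?, hb]

lemma insertAux_cons_of_forall_not_bumps {m a : ℕ} {N : List ℕ} (rest : List (List ℕ))
    (hN : ∀ x ∈ N, bumps m a x = false) : insertAux m a (N :: rest) = ((a :: N) :: rest, 0) := by
  rw [insertAux, bumpIdx_eq_none hN]

lemma insertAux_append_cons_of_bumps {m a b : ℕ} {H N : List ℕ} (rest : List (List ℕ))
    (hb : bumps m a b) (hN : ∀ x ∈ N, bumps m a x = false) :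
    insertAux m a ((H ++ b :: N) :: rest) =
      ((H ++ a :: N) :: (insertAux m b rest).1, (insertAux m b rest).2 + 1) := by
  have hidx : bumpIdx m a (H ++ b :: N) = some H.length := by
    simp [bumpIdx_append, bumpIdx_cons_of_bumps hb hN]
  rw [insertAux, hidx]
  simp

section Insertion

variable {m : ℕ}

lemma pairwise_of_mem_insertAux {a : ℕ} {T : List (List ℕ)} (hT : ∀ C ∈ T, C.Pairwise (· ≤ ·))
    {C : List ℕ} (hC : C ∈ (insertAux m a T).1) : C.Pairwise (· ≤ ·) := by
  induction T generalizing a with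
  | nil => simp_all [insertAux]
  | cons D rest ih =>
    have hD := hT D List.mem_cons_self
    rcases D.forall_eq_false_or_eq_append_cons (bumps m a) with hN | ⟨H, b, N, rfl, hb, hN⟩
    · rw [insertAux_cons_of_forall_not_bumps rest hN] at hC
      rcases List.mem_cons.mp hC with rfl | hC
      · exact List.pairwise_cons.mpr ⟨fun x hx => le_of_not_bumps (hN x hx), hD⟩
      · exact hT C (List.mem_cons_of_mem _ hC)
    · rw [insertAux_append_cons_of_bumps rest hb hN] at hC
      rcases List.mem_cons.mp hC with rfl | hC
      · have hba := le_of_bumps hb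
        simp only [List.pairwise_append, List.pairwise_cons, List.mem_cons] at hD ⊢
        refine ⟨hD.1, ⟨fun x hx => le_of_not_bumps (hN x hx), hD.2.1.2⟩, ?_⟩
        rintro x hx y (rfl | hy)
        · exact (hD.2.2 x hx _ (Or.inl rfl)).trans hba
        · exact hD.2.2 x hx y (Or.inr hy)
      · exact ih (fun E hE => hT E (List.mem_cons_of_mem _ hE)) hC

lemma le_of_mem_insertAux {w a : ℕ} {T : List (List ℕ)} (hT : ∀ C ∈ T, ∀ x ∈ C, w ≤ x)
    (ha : w ≤ a) {C : List ℕ} (hC : C ∈ (insertAux m a T).1) : ∀ x ∈ C, w ≤ x := by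
  induction T generalizing a with
  | nil => simp_all [insertAux]
  | cons D rest ih =>
    rcases D.forall_eq_false_or_eq_append_cons (bumps m a) with hN | ⟨H, b, N, rfl, hb, hN⟩
    · rw [insertAux_cons_of_forall_not_bumps rest hN] at hC
      rcases List.mem_cons.mp hC with rfl | hC
      · simpa [ha] using hT D List.mem_cons_self
      · exact hT C (List.mem_cons_of_mem _ hC)
    · rw [insertAux_append_cons_of_bumps rest hb hN] at hC
      have hD := hT _ List.mem_cons_self
      rcases List.mem_cons.mp hC with rfl | hC
      · simp only [List.mem_append, List.mem_cons] at hD ⊢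
        rintro x (hx | rfl | hx)
        exacts [hD x (Or.inl hx), ha, hD x (Or.inr (Or.inr hx))]
      · exact ih (fun E hE => hT E (List.mem_cons_of_mem _ hE))
          (hD b (by simp)) hC

lemma ne_nil_of_mem_insertAux {a : ℕ} {T : List (List ℕ)} (hT : ∀ C ∈ T, C ≠ [])
    {C : List ℕ} (hC : C ∈ (insertAux m a T).1) : C ≠ [] := by
  induction T generalizing a with
  | nil => simp_all [insertAux]
  | cons D rest ih =>
    rcases D.forall_eq_false_or_eq_append_cons (bumps m a) with hN | ⟨H, b, N, rfl, hb, hN⟩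
    · rw [insertAux_cons_of_forall_not_bumps rest hN] at hC
      rcases List.mem_cons.mp hC with rfl | hC
      · exact List.cons_ne_nil _ _
      · exact hT C (List.mem_cons_of_mem _ hC)
    · rw [insertAux_append_cons_of_bumps rest hb hN] at hC
      rcases List.mem_cons.mp hC with rfl | hC
      · simp
      · exact ih (fun E hE => hT E (List.mem_cons_of_mem _ hE)) hC

lemma insertAux_snd_lt_length (a : ℕ) (T : List (List ℕ)) :
    (insertAux m a T).2 < (insertAux m a T).1.length := by
  induction T generalizing a with
  | nil => simp [insertAux]
  | cons D rest ih =>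
    rcases D.forall_eq_false_or_eq_append_cons (bumps m a) with hN | ⟨H, b, N, rfl, hb, hN⟩
    · simp [insertAux_cons_of_forall_not_bumps rest hN]
    · simpa [insertAux_append_cons_of_bumps rest hb hN] using ih b

end Insertion

section Burge

variable {m : ℕ}

lemma mem_burgeIns {T : List (List ℕ)} {p : ℕ × ℕ} {C : List ℕ} (hC : C ∈ burgeIns m T p) :
    C ∈ (insertAux m p.2 T).1 ∨ ∃ X ∈ (insertAux m p.2 T).1, C = p.1 :: X := by
  rcases List.mem_or_eq_of_mem_set hC with hC | rfl
  · exact Or.inl hC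
  · have hlt := insertAux_snd_lt_length (m := m) p.2 T
    exact Or.inr ⟨_, List.getD_eq_getElem _ _ hlt ▸ List.getElem_mem hlt, rfl⟩

lemma map_burgeIns_of_apply_cons {β : Type*} {f : List ℕ → β} {p : ℕ × ℕ}
    (hf : ∀ X, f (p.1 :: X) = f X) (T : List (List ℕ)) :
    (burgeIns m T p).map f = (insertAux m p.2 T).1.map f :=
  List.map_set_of_apply_eq (hf _)

lemma pairwise_of_mem_burgeIns {T : List (List ℕ)} {p : ℕ × ℕ}
    (hT : ∀ C ∈ T, C.Pairwise (· ≤ ·)) (hTp : ∀ C ∈ T, ∀ x ∈ C, p.1 ≤ x) (hp : p.1 ≤ p.2)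
    {C : List ℕ} (hC : C ∈ burgeIns m T p) : C.Pairwise (· ≤ ·) := by
  rcases mem_burgeIns hC with hC | ⟨X, hX, rfl⟩
  · exact pairwise_of_mem_insertAux hT hC
  · exact List.pairwise_cons.mpr
      ⟨le_of_mem_insertAux hTp hp hX, pairwise_of_mem_insertAux hT hX⟩

lemma le_of_mem_burgeIns {w : ℕ} {T : List (List ℕ)} {p : ℕ × ℕ}
    (hT : ∀ C ∈ T, ∀ x ∈ C, w ≤ x) (hp1 : w ≤ p.1) (hp2 : w ≤ p.2)
    {C : List ℕ} (hC : C ∈ burgeIns m T p) : ∀ x ∈ C, w ≤ x := by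
  rcases mem_burgeIns hC with hC | ⟨X, hX, rfl⟩
  · exact le_of_mem_insertAux hT hp2 hC
  · simpa [hp1] using le_of_mem_insertAux hT hp2 hX

lemma ne_nil_of_mem_burgeIns {T : List (List ℕ)} {p : ℕ × ℕ} (hT : ∀ C ∈ T, C ≠ [])
    {C : List ℕ} (hC : C ∈ burgeIns m T p) : C ≠ [] := by
  rcases mem_burgeIns hC with hC | ⟨X, -, rfl⟩
  · exact ne_nil_of_mem_insertAux hT hC
  · exact List.cons_ne_nil _ _

variable {ps : List (ℕ × ℕ)} {T : List (List ℕ)}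

lemma le_of_mem_foldr_burgeIns {w : ℕ} (hw : ∀ p ∈ ps, w ≤ p.1) (hps : ∀ p ∈ ps, p.1 ≤ p.2)
    (hT : ∀ C ∈ T, ∀ x ∈ C, w ≤ x) :
    ∀ C ∈ ps.foldr (fun p S => burgeIns m S p) T, ∀ x ∈ C, w ≤ x := by
  induction ps with
  | nil => exact hT
  | cons p ps ih =>
    simp only [List.mem_cons, forall_eq_or_imp] at hw hps
    exact fun C hC => le_of_mem_burgeIns (ih hw.2 hps.2) hw.1 (hw.1.trans hps.1) hC

lemma pairwise_of_mem_foldr_burgeIns (hsort : ps.Pairwise fun p q => p.1 ≤ q.1)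
    (hps : ∀ p ∈ ps, p.1 ≤ p.2) (hT : ∀ C ∈ T, C.Pairwise (· ≤ ·))
    (hTps : ∀ p ∈ ps, ∀ C ∈ T, ∀ x ∈ C, p.1 ≤ x) :
    ∀ C ∈ ps.foldr (fun p S => burgeIns m S p) T, C.Pairwise (· ≤ ·) := by
  induction ps with
  | nil => exact hT
  | cons p ps ih =>
    simp only [List.pairwise_cons] at hsort
    simp only [List.mem_cons, forall_eq_or_imp] at hps hTps
    have hbound := le_of_mem_foldr_burgeIns (m := m) hsort.1 (fun q hq => hps.2 q hq) hTps.1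
    exact fun C hC => pairwise_of_mem_burgeIns (ih hsort.2 hps.2 hTps.2) hbound hps.1 hC

lemma ne_nil_of_mem_foldr_burgeIns (hT : ∀ C ∈ T, C ≠ []) :
    ∀ C ∈ ps.foldr (fun p S => burgeIns m S p) T, C ≠ [] := by
  induction ps with
  | nil => exact hT
  | cons p ps ih => exact fun C hC => ne_nil_of_mem_burgeIns ih hC

end Burge

def HasGe (v : ℕ) (C : List ℕ) : Prop := ∃ x ∈ C, v ≤ x

def GeColsPrefix (v : ℕ) (T : List (List ℕ)) : Prop :=
  T.IsChain fun C D => HasGe v D → HasGe v C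

section GeColsPrefix

variable {m v : ℕ}

@[simp] lemma hasGe_nil : ¬HasGe v [] := by simp [HasGe]

@[simp] lemma hasGe_cons {a : ℕ} {C : List ℕ} : HasGe v (a :: C) ↔ v ≤ a ∨ HasGe v C := by
  simp [HasGe]

@[simp] lemma hasGe_append {A B : List ℕ} : HasGe v (A ++ B) ↔ HasGe v A ∨ HasGe v B := by
  simp [HasGe, or_and_right, exists_or]

lemma GeColsPrefix.tail {C : List ℕ} {T : List (List ℕ)} (h : GeColsPrefix v (C :: T)) :
    GeColsPrefix v T :=
  List.IsChain.tail h

lemma GeColsPrefix.cons_of_imp {C C' : List ℕ} {T : List (List ℕ)} (h : GeColsPrefix v (C :: T))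
    (hC : HasGe v C → HasGe v C') : GeColsPrefix v (C' :: T) := by
  cases T with
  | nil => exact List.isChain_singleton _
  | cons D T =>
    rw [GeColsPrefix, List.isChain_cons_cons] at h ⊢
    exact ⟨hC ∘ h.1, h.2⟩

lemma GeColsPrefix.cons_of_hasGe {C : List ℕ} {T : List (List ℕ)} (hC : HasGe v C)
    (hT : GeColsPrefix v T) : GeColsPrefix v (C :: T) := by
  cases T with
  | nil => exact List.isChain_singleton _
  | cons D T => exact List.isChain_cons_cons.mpr ⟨fun _ => hC, hT⟩

lemma GeColsPrefix.of_forall_hasGe {T : List (List ℕ)} (h : ∀ C ∈ T, HasGe v C) :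
    GeColsPrefix v T := by
  induction T with
  | nil => exact List.IsChain.nil
  | cons C T ih =>
    simp only [List.mem_cons, forall_eq_or_imp] at h
    exact (ih h.2).cons_of_hasGe h.1

lemma GeColsPrefix.cons_insertAux {a : ℕ} {X : List ℕ} {T : List (List ℕ)}
    (hT : GeColsPrefix v (X :: T)) (hX : v ≤ a → HasGe v X) :
    GeColsPrefix v (X :: (insertAux m a T).1) := by
  induction T generalizing X a with
  | nil => exact List.isChain_pair.mpr (by simpa [insertAux] using hX)
  | cons D rest ih =>
    rw [GeColsPrefix, List.isChain_cons_cons] at hT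
    rcases D.forall_eq_false_or_eq_append_cons (bumps m a) with hN | ⟨H, b, N, rfl, hb, hN⟩
    · rw [insertAux_cons_of_forall_not_bumps rest hN, GeColsPrefix, List.isChain_cons_cons]
      refine ⟨?_, GeColsPrefix.cons_of_imp hT.2 fun h => hasGe_cons.mpr (Or.inr h)⟩
      simp only [hasGe_cons]
      tauto
    · have hba := le_of_bumps hb
      rw [insertAux_append_cons_of_bumps rest hb hN, GeColsPrefix, List.isChain_cons_cons]
      refine ⟨?_, ih (GeColsPrefix.cons_of_imp hT.2 ?_) fun hvb => by simp [hvb.trans hba]⟩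
      · simp only [hasGe_append, hasGe_cons] at hT ⊢
        tauto
      · simp only [hasGe_append, hasGe_cons]
        rintro (h | h | h)
        exacts [Or.inl h, Or.inr (Or.inl (h.trans hba)), Or.inr (Or.inr h)]

lemma GeColsPrefix.insertAux {a : ℕ} {T : List (List ℕ)} (hT : GeColsPrefix v T) :
    GeColsPrefix v (insertAux m a T).1 :=
  ((hT.cons_of_hasGe (C := [v]) (by simp)).cons_insertAux fun _ => by simp).tail

lemma geColsPrefix_iff {T : List (List ℕ)} :
    GeColsPrefix v T ↔ (T.map (HasGe v)).IsChain fun P Q => Q → P := by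
  rw [List.isChain_map, GeColsPrefix]

lemma GeColsPrefix.burgeIns_of_lt {p : ℕ × ℕ} (hp : p.1 < v) {T : List (List ℕ)}
    (hT : GeColsPrefix v T) : GeColsPrefix v (burgeIns m T p) := by
  rw [geColsPrefix_iff, map_burgeIns_of_apply_cons fun X => by simp [Nat.not_le.mpr hp],
    ← geColsPrefix_iff]
  exact hT.insertAux

variable {ps : List (ℕ × ℕ)} {T : List (List ℕ)}

lemma GeColsPrefix.foldr_burgeIns (hps : ∀ p ∈ ps, p.1 < v) (hT : GeColsPrefix v T) :
    GeColsPrefix v (ps.foldr (fun p S => burgeIns m S p) T) := by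
  induction ps with
  | nil => exact hT
  | cons p ps ih =>
    simp only [List.mem_cons, forall_eq_or_imp] at hps
    exact (ih hps.2).burgeIns_of_lt hps.1

end GeColsPrefix

section GeSub

variable {m v : ℕ}

lemma geSub_cons (C : List ℕ) (T : List (List ℕ)) :
    geSub v (C :: T) =
      if C.filter (v ≤ ·) = [] then geSub v T else C.filter (v ≤ ·) :: geSub v T := by
  by_cases h : C.filter (v ≤ ·) = [] <;> simp [geSub, h]

lemma geSub_eq_nil_iff {T : List (List ℕ)} : geSub v T = [] ↔ ∀ C ∈ T, ¬HasGe v C := by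
  simp [geSub, HasGe, List.filter_eq_nil_iff]

lemma geSub_eq_self {T : List (List ℕ)} (hne : ∀ C ∈ T, C ≠ [])
    (hv : ∀ C ∈ T, ∀ x ∈ C, v ≤ x) : geSub v T = T := by
  have hcols : ∀ C ∈ T, C.filter (v ≤ ·) = C := fun C hC =>
    List.filter_eq_self.mpr fun x hx => by simpa using hv C hC x hx
  rw [geSub, List.map_congr_left hcols, List.map_id', List.filter_eq_self]
  simpa using hne

lemma geSub_eq_nil_of_not_hasGe {C : List ℕ} {T : List (List ℕ)}
    (hT : GeColsPrefix v (C :: T)) (hC : ¬HasGe v C) : geSub v (C :: T) = [] := by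
  induction T generalizing C with
  | nil => simpa [geSub_eq_nil_iff] using hC
  | cons D T ih =>
    rw [GeColsPrefix, List.isChain_cons_cons] at hT
    have hD : ¬HasGe v D := fun h => hC (hT.1 h)
    have := geSub_eq_nil_iff.mp (ih hT.2 hD)
    exact geSub_eq_nil_iff.mpr (by simpa [hC] using this)

lemma geSub_insertAux_of_lt {a : ℕ} (ha : a < v) (T : List (List ℕ)) :
    geSub v (insertAux m a T).1 = geSub v T := by
  induction T generalizing a with
  | nil => simp [insertAux, geSub, Nat.not_le.mpr ha]
  | cons D rest ih =>
    rcases D.forall_eq_false_or_eq_append_cons (bumps m a) with hN | ⟨H, b, N, rfl, hb, hN⟩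
    · simp [insertAux_cons_of_forall_not_bumps rest hN, geSub_cons, Nat.not_le.mpr ha]
    · have hb' : ¬v ≤ b := by have := le_of_bumps hb; omega
      simp [insertAux_append_cons_of_bumps rest hb hN, geSub_cons, ih (a := b) (by omega),
        Nat.not_le.mpr ha, hb']

lemma insertAux_geSub_cons {a : ℕ} {C : List ℕ} {T : List (List ℕ)}
    (hT : GeColsPrefix v (C :: T)) (hC : ∀ x ∈ C.filter (v ≤ ·), bumps m a x = false) :
    (insertAux m a (geSub v (C :: T))).1 = (a :: C.filter (v ≤ ·)) :: geSub v T := by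
  by_cases hnil : C.filter (v ≤ ·) = []
  · have hC' : ¬HasGe v C := by simpa [HasGe, List.filter_eq_nil_iff] using hnil
    have hrest := geSub_eq_nil_of_not_hasGe hT hC'
    rw [geSub_cons, if_pos hnil] at hrest
    rw [geSub_eq_nil_of_not_hasGe hT hC', hnil, hrest]
    rfl
  · rw [geSub_cons, if_neg hnil, insertAux_cons_of_forall_not_bumps _ hC]

lemma geSub_insertAux_of_le {a : ℕ} (ha : v ≤ a) {T : List (List ℕ)}
    (hsort : ∀ C ∈ T, C.Pairwise (· ≤ ·)) (hT : GeColsPrefix v T) :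
    geSub v (insertAux m a T).1 = (insertAux m a (geSub v T)).1 := by
  induction T generalizing a with
  | nil => simp [insertAux, geSub, ha]
  | cons D rest ih =>
    have hsort' : ∀ C ∈ rest, C.Pairwise (· ≤ ·) := fun C hC => hsort C (List.mem_cons_of_mem _ hC)
    rcases D.forall_eq_false_or_eq_append_cons (bumps m a) with hN | ⟨H, b, N, rfl, hb, hN⟩
    · have hD : D.filter (v ≤ ·) = D := List.filter_eq_self.mpr fun x hx => by
        simpa using ha.trans (le_of_not_bumps (hN x hx))
      have := insertAux_geSub_cons (m := m) (a := a) hT (by rw [hD]; exact hN)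
      rw [insertAux_cons_of_forall_not_bumps rest hN, this, geSub_cons,
        List.filter_cons_of_pos (by simpa using ha), hD, if_neg (List.cons_ne_nil _ _)]
    · have hNv : N.filter (v ≤ ·) = N := List.filter_eq_self.mpr fun x hx => by
        simpa using ha.trans (le_of_not_bumps (hN x hx))
      rw [insertAux_append_cons_of_bumps rest hb hN]
      by_cases hvb : v ≤ b
      · have hne : (H ++ b :: N).filter (v ≤ ·) ≠ [] := by simp [hvb]
        rw [geSub_cons, if_neg (by simp [ha]), geSub_cons, if_neg hne,
          ih (a := b) hvb hsort' hT.tail]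
        simp only [List.filter_append, List.filter_cons_of_pos (p := (v ≤ ·)) (by simpa using hvb),
          List.filter_cons_of_pos (p := (v ≤ ·)) (by simpa using ha), hNv,
          insertAux_append_cons_of_bumps _ hb hN]
      · have hH : H.filter (v ≤ ·) = [] := List.filter_eq_nil_iff.mpr fun x hx => by
          have := (List.pairwise_append.mp (hsort _ List.mem_cons_self)).2.2 x hx b
            List.mem_cons_self
          simp; omega
        have hD : (H ++ b :: N).filter (v ≤ ·) = N := by
          simp [List.filter_append, hH, hvb, hNv]
        rw [insertAux_geSub_cons hT (by rw [hD]; exact hN), hD, geSub_cons,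
          geSub_insertAux_of_lt (Nat.not_le.mp hvb), List.filter_append, hH,
          List.filter_cons_of_pos (by simpa using ha), hNv]
        rfl

lemma geSub_burgeIns_of_lt {p : ℕ × ℕ} (hp : p.1 < v) (T : List (List ℕ)) :
    geSub v (burgeIns m T p) = geSub v (insertAux m p.2 T).1 := by
  unfold geSub
  rw [map_burgeIns_of_apply_cons fun X => List.filter_cons_of_neg (by simpa using hp)]

variable {ps : List (ℕ × ℕ)} {T : List (List ℕ)}

lemma geSub_foldr_burgeIns (hsort : ps.Pairwise fun p q => p.1 ≤ q.1)
    (hps : ∀ p ∈ ps, p.1 ≤ p.2) (hlow : ∀ p ∈ ps, p.1 < v) (hT : ∀ C ∈ T, C.Pairwise (· ≤ ·))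
    (hTps : ∀ p ∈ ps, ∀ C ∈ T, ∀ x ∈ C, p.1 ≤ x) (hTv : GeColsPrefix v T) :
    geSub v (ps.foldr (fun p S => burgeIns m S p) T) =
      (ps.filter fun p => v ≤ p.2).foldr (fun p S => colIns m S p.2) (geSub v T) := by
  induction ps with
  | nil => rfl
  | cons p ps ih =>
    simp only [List.pairwise_cons] at hsort
    simp only [List.mem_cons, forall_eq_or_imp] at hps hlow hTps
    have hsorted := pairwise_of_mem_foldr_burgeIns (m := m) hsort.2 hps.2 hT hTps.2
    have hprefix := GeColsPrefix.foldr_burgeIns (m := m) hlow.2 hTv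
    rw [List.foldr_cons, geSub_burgeIns_of_lt hlow.1, List.filter_cons]
    by_cases hv : v ≤ p.2
    · rw [geSub_insertAux_of_le hv hsorted hprefix, ih hsort.2 hps.2 hlow.2 hTps.2]
      simp [hv, colIns]
    · rw [geSub_insertAux_of_lt (Nat.not_le.mp hv), ih hsort.2 hps.2 hlow.2 hTps.2]
      simp [hv]

end GeSub

section Biword

variable {m n : ℕ}

lemma mem_biletters {p : ℕ × ℕ} (hp : p ∈ biletters m n) : p.1 ≤ p.2 ∧ p.2 ≤ m + n := by
  simp only [biletters, List.mem_flatten, List.mem_map, List.mem_range'_1] at hp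
  obtain ⟨_, ⟨i, hi, rfl⟩, hp⟩ := hp
  split at hp <;> simp only [List.mem_reverse, List.mem_map, List.mem_range'_1] at hp <;>
    obtain ⟨j, hj, rfl⟩ := hp <;> omega

lemma mem_biword {c : ℕ × ℕ → ℕ} {p : ℕ × ℕ} (hp : p ∈ biword m n c) :
    c p ≠ 0 ∧ p.1 ≤ p.2 ∧ p.2 ≤ m + n := by
  simp only [biword, List.mem_flatten, List.mem_map] at hp
  obtain ⟨_, ⟨q, hq, rfl⟩, hp⟩ := hp
  obtain ⟨hc, rfl⟩ := List.mem_replicate.mp hp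
  exact ⟨hc, mem_biletters hq⟩

lemma biletters_pairwise : (biletters m n).Pairwise fun p q => p.1 ≤ q.1 := by
  rw [biletters, ← List.flatMap_def]
  refine List.pairwise_flatMap_of_fst_eq (List.pairwise_le_range' _) fun i _ p hp => ?_
  split at hp <;> simp only [List.mem_reverse, List.mem_map] at hp <;>
    obtain ⟨j, -, rfl⟩ := hp <;> rfl

lemma biword_pairwise (c : ℕ × ℕ → ℕ) : (biword m n c).Pairwise fun p q => p.1 ≤ q.1 := by
  rw [biword, ← List.flatMap_def, List.pairwise_flatMap]
  refine ⟨fun p _ => List.pairwise_replicate.mpr (Or.inr le_rfl), ?_⟩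
  refine biletters_pairwise.imp fun hpq x hx y hy => ?_
  rw [(List.mem_replicate.mp hx).2, (List.mem_replicate.mp hy).2]
  exact hpq

lemma biword_cRes (S : ℕ × ℕ → Prop) (c : ℕ × ℕ → ℕ) :
    biword m n (cRes S c) = (biword m n c).filter fun p => S p := by
  simp only [biword, List.filter_flatten, List.map_map]
  congr 1
  refine List.map_congr_left fun p _ => ?_
  by_cases hp : S p <;> simp [cRes, hp]

end Biword

section Kappa

variable {m n : ℕ} {c : ℕ × ℕ → ℕ}

lemma le_of_mem_kappa {v : ℕ} (hv : ∀ p ∈ biword m n c, v ≤ p.1) :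
    ∀ C ∈ kappa m n c, ∀ x ∈ C, v ≤ x :=
  le_of_mem_foldr_burgeIns hv (fun _ hp => (mem_biword hp).2.1) (by simp)

lemma pairwise_of_mem_kappa : ∀ C ∈ kappa m n c, C.Pairwise (· ≤ ·) :=
  pairwise_of_mem_foldr_burgeIns (biword_pairwise c) (fun _ hp => (mem_biword hp).2.1) (by simp)
    (by simp)

lemma ne_nil_of_mem_kappa : ∀ C ∈ kappa m n c, C ≠ [] :=
  ne_nil_of_mem_foldr_burgeIns (by simp)

lemma biword_eq_filter_append_biword_cRes (v : ℕ) :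
    biword m n c = (biword m n c).filter (·.1 < v) ++ biword m n (cRes (BTset m n v) c) := by
  have hsorted := (biword_pairwise (m := m) (n := n) c).imp
    (S := fun p q => decide (q.1 < v) → decide (p.1 < v)) fun hpq hq => by simp at hq ⊢; omega
  conv_lhs => rw [← List.filter_append_filter_not_of_pairwise hsorted]
  rw [biword_cRes]
  refine congrArg _ (List.filter_congr fun p hp => ?_)
  have := mem_biword hp
  rw [Bool.eq_iff_iff, decide_eq_true_iff]
  simp only [Bool.not_eq_true', decide_eq_false_iff_not, BTset]
  omega

lemma geSub_kappa (v : ℕ) :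
    geSub v (kappa m n c) =
      (((biword m n c).filter (·.1 < v)).filter (v ≤ ·.2)).foldr (fun p S => colIns m S p.2)
        (kappa m n (cRes (BTset m n v) c)) := by
  have hK : ∀ C ∈ kappa m n (cRes (BTset m n v) c), ∀ x ∈ C, v ≤ x :=
    le_of_mem_kappa fun p hp => by
      rw [biword_cRes, List.mem_filter] at hp
      exact (of_decide_eq_true hp.2).1
  have hlow : ∀ p ∈ (biword m n c).filter (·.1 < v), p.1 < v := fun p hp => by
    simpa using (List.mem_filter.mp hp).2
  have hprefix : GeColsPrefix v (kappa m n (cRes (BTset m n v) c)) :=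
    GeColsPrefix.of_forall_hasGe fun C hC =>
      have ⟨x, hx⟩ := List.exists_mem_of_ne_nil C (ne_nil_of_mem_kappa C hC)
      ⟨x, hx, hK C hC x hx⟩
  conv_lhs => rw [kappa, biword_eq_filter_append_biword_cRes v, List.foldr_append, ← kappa]
  rw [geSub_foldr_burgeIns ((biword_pairwise c).filter _)
      (fun p hp => (mem_biword (List.mem_filter.mp hp).1).2.1) hlow pairwise_of_mem_kappa
      (fun p hp C hC x hx => ((hlow p hp).trans_le (hK C hC x hx)).le) hprefix,
    geSub_eq_self ne_nil_of_mem_kappa hK]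

end Kappa

lemma Md.lt_fst_of_eq {m n : ℕ} {c : ℕ × ℕ → ℕ} (hc : Md m n c) {p : ℕ × ℕ} (hp : c p ≠ 0)
    (h : p.1 = p.2) : m < p.1 := by
  by_contra hpm
  exact hp (by rw [show p = (p.1, p.1) from Prod.ext rfl h.symm]; exact hc.2.2 _ (by omega))

/-- Those of `(i,i)`, `(i,i+1)`, `(i+1,i+1)` that lie outside `△_i` are diagonal in an even row. -/
lemma diaSet_iff {m n i : ℕ} (him : i ≠ m) {p : ℕ × ℕ} (hi : i ≤ p.1) (hp : p.1 ≤ p.2)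
    (hpn : p.2 ≤ m + n) (hdiag : p.1 = p.2 → m < p.1) :
    DiaSet m n i p ↔ p.1 < i + 2 ∧ i + 2 ≤ p.2 := by
  obtain ⟨k, l⟩ := p
  simp only [DiaSet, BTset, TriSet] at *
  split_ifs <;> simp only [Prod.mk.injEq] <;> omega

lemma biword_cRes_diaSet {m n i : ℕ} (him : i ≠ m) {c : ℕ × ℕ → ℕ} (hc : Md m n c)
    (hsupp : ∀ p : ℕ × ℕ, c p ≠ 0 → i ≤ p.1) :
    biword m n (cRes (DiaSet m n i) c) =
      ((biword m n c).filter (·.1 < i + 2)).filter (i + 2 ≤ ·.2) := by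
  rw [biword_cRes, List.filter_filter]
  refine List.filter_congr fun p hp => ?_
  obtain ⟨hcp, hp12, hpn⟩ := mem_biword hp
  simp [diaSet_iff him (hsupp p hcp) hp12 hpn (hc.lt_fst_of_eq hcp), Bool.and_comm]

theorem statement5_general (m n : ℕ) (i : ℕ)
    (him : i ≠ m) (c : ℕ × ℕ → ℕ) (hc : Md m n c)
    (hsupp : ∀ p : ℕ × ℕ, c p ≠ 0 → i ≤ p.1) :
    PtabI m n i c = geSub (i + 2) (kappa m n c) := by
  rw [geSub_kappa, ← biword_cRes_diaSet him hc hsupp]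
  rfl

/-- For every `i ∈ {1, …, m+n−1}` with `i ≠ m` and every `c ∈ M_{▵_i}`, the tableau
`𝙿_i(c)` equals the subtableau of `κ(c)` consisting of all boxes whose entries are
greater than or equal to `i+2`. -/
theorem statement5 (m n : ℕ) (hm : 2 ≤ m) (hn : 1 ≤ n) (i : ℕ) (hi1 : 1 ≤ i)
    (hi2 : i ≤ m + n - 1) (him : i ≠ m) (c : ℕ × ℕ → ℕ) (hc : Md m n c)
    (hsupp : ∀ p : ℕ × ℕ, c p ≠ 0 → i ≤ p.1) :
    PtabI m n i c = geSub (i + 2) (kappa m n c) :=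
  statement5_general m n i him c hc hsupp
end

section
/- For every k ≥ −1 and every a ∈ ℤ≥0, F(X_k(2a)) = X_{k+2}(2a). -/
/-- A two-rowed array: a pair of sequences of non-negative integers indexed by `ℤ`
(the `x`-row and the `y`-row). -/
abbrev TwoRow : Type := (ℤ → ℕ) × (ℤ → ℕ)

/-- A two-rowed array has finite support and vanishes for all `k ≤ -2`. -/
def TwoRow.Supported (X : TwoRow) : Prop :=
  (∀ k : ℤ, k ≤ -2 → X.1 k = 0 ∧ X.2 k = 0) ∧
    ∃ N : ℤ, ∀ k : ℤ, N ≤ k → X.1 k = 0 ∧ X.2 k = 0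

/-- `q(z) = ⌊z/2⌋` -/
def qH (z : ℕ) : ℕ := z / 2

/-- `r(z) = z - 2⌊z/2⌋` -/
def rH (z : ℕ) : ℕ := z % 2

/-- `z_k = min{x_k, r(y_k) + 2q(y_{k-1})}` -/
def zS (X : TwoRow) (k : ℤ) : ℕ := min (X.1 k) (rH (X.2 k) + 2 * qH (X.2 (k - 1)))

/-- `X_k = x_k - z_k + z_{k-1}` -/
def XS (X : TwoRow) (k : ℤ) : ℕ := X.1 k - zS X k + zS X (k - 1)

/-- The operation `F`, given by `X̃_k = r(X_k) + 2q(X_{k-1})` and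
`Ỹ_k = r(y_k) + 2q(y_{k-1}) - z_k + z_{k-1}`. -/
def Fop (X : TwoRow) : TwoRow :=
  (fun k => rH (XS X k) + 2 * qH (XS X (k - 1)),
   fun k => rH (X.2 k) + 2 * qH (X.2 (k - 1)) - zS X k + zS X (k - 1))

/-- `𝗫_k(a)`: the two-rowed array whose only non-zero entries are `x_{k+1} = a` and `y_k = a`. -/
def XkArr (k : ℤ) (a : ℕ) : TwoRow :=
  (fun j => if j = k + 1 then a else 0, fun j => if j = k then a else 0)

/-- `X` is reduced if `min{x_{k+1}, y_k} ≤ 1` for every `k`. -/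
def TwoRow.Reduced (X : TwoRow) : Prop := ∀ k : ℤ, min (X.1 (k + 1)) (X.2 k) ≤ 1


lemma zS_XkArr (k : ℤ) (a : ℕ) (j : ℤ) :
    zS (XkArr k (2 * a)) j = if j = k + 1 then 2 * a else 0 := by
  unfold zS XkArr rH qH
  by_cases h : j = k + 1
  · have h1 : j ≠ k := by omega
    have h2 : j - 1 = k := by omega
    simp [h, h1, h2, Nat.mul_div_cancel_left a (by norm_num : 0 < 2)]
  · simp [h]

lemma XS_XkArr (k : ℤ) (a : ℕ) (j : ℤ) :
    XS (XkArr k (2 * a)) j = if j = k + 2 then 2 * a else 0 := by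
  unfold XS
  rw [zS_XkArr, zS_XkArr]
  show (if j = k + 1 then 2 * a else 0) - _ + _ = _
  by_cases h : j = k + 1
  · have h2 : j ≠ k + 2 := by omega
    have h3 : j - 1 ≠ k + 1 := by omega
    simp [h, h2, h3]
  · by_cases h2 : j = k + 2
    · subst h2
      have h3 : k + 2 - 1 = k + 1 := by ring
      simp [h, h3]
    · have h3 : j - 1 ≠ k + 1 := by omega
      simp [h, h2, h3]

/-- For every `k ≥ −1` and every `a ∈ ℤ≥0`, `F(X_k(2a)) = X_{k+2}(2a)`. -/
theorem statement9 (k : ℤ) (hk : -1 ≤ k) (a : ℕ) :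
    Fop (XkArr k (2 * a)) = XkArr (k + 2) (2 * a) := by
  ext j
  · show rH (XS _ j) + 2 * qH (XS _ (j - 1)) = _
    rw [XS_XkArr, XS_XkArr]
    show _ = if j = (k + 2) + 1 then 2 * a else 0
    by_cases h : j = k + 3
    · have h1 : j ≠ k + 2 := by omega
      have h2 : j - 1 = k + 2 := by omega
      have h3 : j = (k + 2) + 1 := by omega
      simp [h1, h2, h3, rH, qH, Nat.mul_div_cancel_left a (by norm_num : 0 < 2)]
    · have h1 : j ≠ k + 2 ∨ True := Or.inr trivial
      have h3 : j ≠ (k + 2) + 1 := by omega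
      have h4 : j - 1 ≠ k + 2 := by omega
      by_cases h5 : j = k + 2 <;> simp [h3, h4, h5, rH, qH]
  · show rH ((XkArr k (2*a)).2 j) + 2 * qH ((XkArr k (2*a)).2 (j - 1)) - zS _ j + zS _ (j - 1)
        = (XkArr (k + 2) (2 * a)).2 j
    rw [zS_XkArr, zS_XkArr]
    unfold XkArr rH qH
    by_cases h : j = k + 2
    · subst h
      simp [show k + 2 ≠ k from by omega, show k + 2 - 1 ≠ k from by omega,
        show k + 2 ≠ k + 1 from by omega, show k + 2 - 1 = k + 1 from by ring]
    · by_cases h1 : j = k + 1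
      · subst h1
        simp [show k + 1 ≠ k from by omega, show k + 1 - 1 = k from by ring,
          show k + 1 - 1 ≠ k + 1 from by omega, show (k:ℤ) + 1 ≠ k + 2 from by omega,
          Nat.mul_div_cancel_left a (by norm_num : 0 < 2)]
      · have h3 : j - 1 ≠ k := by omega
        have h4 : j - 1 ≠ k + 1 := by omega
        by_cases h2 : j = k
        · subst h2
          simp [h, h1, h3, h4, Nat.mul_mod_right]
        · simp [h, h1, h2, h3, h4]
end

section
/- For every two-rowed array X, every k ≥ −1 and every a ∈ ℤ≥0, F(X + X_k(2a)) = F(X) + X_{k+2}(2a). -/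
lemma rH_add_even (u a : ℕ) : rH (u + 2 * a) = rH u := by
  simp [rH, Nat.add_mul_mod_self_left]

lemma qH_add_even (u a : ℕ) : qH (u + 2 * a) = qH u + a := by
  simp [qH, Nat.add_mul_div_left _ _ (by norm_num : 0 < 2)]

lemma rH_add_ite (c : Prop) [Decidable c] (u a : ℕ) :
    rH (u + if c then 2 * a else 0) = rH u := by
  split_ifs <;> simp [rH_add_even]

lemma qH_add_ite (c : Prop) [Decidable c] (u a : ℕ) :
    qH (u + if c then 2 * a else 0) = qH u + (if c then a else 0) := by
  split_ifs <;> simp [qH_add_even]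

lemma zS_le_left (X : TwoRow) (j : ℤ) : zS X j ≤ X.1 j := by
  unfold zS; exact min_le_left _ _

lemma zS_le_right (X : TwoRow) (j : ℤ) :
    zS X j ≤ rH (X.2 j) + 2 * qH (X.2 (j - 1)) := by
  unfold zS; exact min_le_right _ _

lemma zS_shift (X : TwoRow) (k : ℤ) (a : ℕ) (j : ℤ) :
    zS (X + XkArr k (2 * a)) j = zS X j + (if j = k + 1 then 2 * a else 0) := by
  unfold zS XkArr
  simp only [Prod.fst_add, Prod.snd_add, Pi.add_apply, rH_add_ite, qH_add_ite]
  have h : (j - 1 = k) ↔ (j = k + 1) := by omega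
  simp only [h]
  split_ifs <;> omega

lemma XS_shift (X : TwoRow) (k : ℤ) (a : ℕ) (j : ℤ) :
    XS (X + XkArr k (2 * a)) j = XS X j + (if j = k + 2 then 2 * a else 0) := by
  unfold XS
  rw [zS_shift, zS_shift]
  simp only [Prod.fst_add, Pi.add_apply, XkArr]
  have hle := zS_le_left X j
  have h : (j - 1 = k + 1) ↔ (j = k + 2) := by omega
  simp only [h]
  split_ifs <;> omega

/-- For every two-rowed array `X`, every `k ≥ −1` and every `a ∈ ℤ≥0`,
`F(X + X_k(2a)) = F(X) + X_{k+2}(2a)`. -/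
theorem statement10 (X : TwoRow) (hX : X.Supported) (k : ℤ) (hk : -1 ≤ k) (a : ℕ) :
    Fop (X + XkArr k (2 * a)) = Fop X + XkArr (k + 2) (2 * a) := by
  have key1 : ∀ j : ℤ, (Fop (X + XkArr k (2 * a))).1 j = (Fop X + XkArr (k + 2) (2 * a)).1 j := by
    intro j
    simp only [Fop, Prod.fst_add, Pi.add_apply, XS_shift]
    simp only [rH_add_ite, qH_add_ite, XkArr]
    split_ifs <;> omega
  have key2 : ∀ j : ℤ, (Fop (X + XkArr k (2 * a))).2 j = (Fop X + XkArr (k + 2) (2 * a)).2 j := by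
    intro j
    simp only [Fop, Prod.snd_add, Pi.add_apply, zS_shift]
    simp only [XkArr, Prod.snd_add, Pi.add_apply, rH_add_ite, qH_add_ite]
    have hle := zS_le_right X j
    split_ifs <;> omega
  exact Prod.ext (funext key1) (funext key2)
end

section
/- For every two-rowed array X, every k ≥ −1 and every a ∈ ℤ≥0, f̃(X + X_k(2a)) = f̃(X) + X_k(2a), where both sides are understood to be 0 if f̃X = 0. -/
open scoped Classical

/-- The annotated signature of `X` read from column `N` down to column `-1`:
`true` stands for a `+` (coming from the block `+^{x_k}`) and `false` for a `−`
(coming from `−^{y_k}`); within each column the `−`'s precede the `+`'s, and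
columns are listed with `k` decreasing from left to right. -/
def sigFrom (X : TwoRow) (N : ℤ) : List (Bool × ℤ) :=
  ((List.range (N + 2).toNat).map fun t =>
      List.replicate (X.2 (N - (t : ℤ))) ((false, N - (t : ℤ)) : Bool × ℤ) ++
        List.replicate (X.1 (N - (t : ℤ))) ((true, N - (t : ℤ)) : Bool × ℤ)).flatten

/-- The signature of a (finitely supported) two-rowed array. -/
noncomputable def sigOf (X : TwoRow) : List (Bool × ℤ) :=
  sigFrom X (if h : ∃ N : ℤ, ∀ k : ℤ, N ≤ k → X.1 k = 0 ∧ X.2 k = 0 then h.choose else 0)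

/-- One step of the cancellation of pairs `(+,−)` (a `+` standing to the left of a `−`,
with everything in between already removed), implemented with a stack. -/
def redStep {α : Type} (st : List (Bool × α)) (c : Bool × α) : List (Bool × α) :=
  match c.1, st with
  | false, (true, _) :: st' => st'
  | _, _ => c :: st

/-- The reduced form of a signature. -/
def reduceSig {α : Type} (l : List (Bool × α)) : List (Bool × α) := (l.foldl redStep []).reverse

/-- The reduced signature `σ̄(X)` (annotated by the column index each symbol comes from). -/
noncomputable def redSig (X : TwoRow) : List (Bool × ℤ) := reduceSig (sigOf X)

/-- The operator `f̃`: if the reduced signature contains no `+`, the result is `0` (`none`);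
otherwise, if the leftmost remaining `+` comes from the block `+^{x_k}`, the result is
`X - x_k(1) + y_k(1)`. -/
noncomputable def ftilde (X : TwoRow) : Option TwoRow :=
  match (redSig X).find? (fun c => c.1) with
  | none => none
  | some c =>
      some (fun j => if j = c.2 then X.1 j - 1 else X.1 j,
            fun j => if j = c.2 then X.2 j + 1 else X.2 j)

/-! Adding `𝗫_k(m)` puts `m` new `+`'s at the end of column `k + 1` and `m` new `−`'s at the
start of column `k`. In the signature these two blocks are adjacent, `+^m −^m`, so they cancel
against each other and the reduced signature is unchanged. Hence `f̃` acts on the same column `j`,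
and `X ↦ X - x_j(1) + y_j(1)` commutes with adding `𝗫_k(m)` because `x_j ≥ 1`. -/

section Reduction

variable {α : Type}

theorem redStep_subset (st : List (Bool × α)) (c : Bool × α) : redStep st c ⊆ c :: st := by
  unfold redStep
  split
  · exact fun d hd => List.mem_cons_of_mem _ (List.mem_cons_of_mem _ hd)
  · exact List.Subset.refl _

theorem foldl_redStep_subset (l st : List (Bool × α)) : l.foldl redStep st ⊆ st ++ l := by
  induction l generalizing st with
  | nil => simp
  | cons c l ih =>
    intro d hd
    rcases List.mem_append.mp (ih (redStep st c) hd) with h | h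
    · rcases List.mem_cons.mp (redStep_subset st c h) with rfl | h <;> simp [*]
    · simp [h]

theorem reduceSig_subset (l : List (Bool × α)) : reduceSig l ⊆ l := by
  intro c hc
  simpa using foldl_redStep_subset l [] (List.mem_reverse.mp hc)

theorem foldl_redStep_replicate_true (n : ℕ) (c : α) (st : List (Bool × α)) :
    (List.replicate n (true, c)).foldl redStep st = List.replicate n (true, c) ++ st := by
  induction n generalizing st with
  | zero => rfl
  | succ n ih =>
    rw [List.replicate_succ, List.foldl_cons, ih]
    show List.replicate n (true, c) ++ (true, c) :: st = _
    rw [List.append_cons, ← List.replicate_succ', List.replicate_succ, List.cons_append]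

theorem foldl_redStep_replicate_false (n : ℕ) (c c' : α) (st : List (Bool × α)) :
    (List.replicate n (false, c')).foldl redStep (List.replicate n (true, c) ++ st) = st := by
  induction n with
  | zero => rfl
  | succ n ih => exact ih

theorem foldl_redStep_cancel (n : ℕ) (c c' : α) (l₁ l₂ st : List (Bool × α)) :
    (l₁ ++ (List.replicate n (true, c) ++ (List.replicate n (false, c') ++ l₂))).foldl redStep st =
      (l₁ ++ l₂).foldl redStep st := by
  simp only [List.foldl_append, foldl_redStep_replicate_true, foldl_redStep_replicate_false]

end Reduction

/-- The block `−^{y_j} +^{x_j}` of the signature. -/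
def column (X : TwoRow) (j : ℤ) : List (Bool × ℤ) :=
  List.replicate (X.2 j) (false, j) ++ List.replicate (X.1 j) (true, j)

section Signature

variable (X Y : TwoRow)

theorem sigFrom_eq_flatten (N : ℤ) :
    sigFrom X N = ((List.range (N + 2).toNat).map fun t : ℕ => column X (N - t)).flatten := by
  simp only [sigFrom, bind_pure_comp, List.map_eq_map, List.map_map]
  rfl

theorem sigFrom_of_le (N : ℤ) (hN : N ≤ -2) : sigFrom X N = [] := by
  simp [sigFrom_eq_flatten, Int.toNat_eq_zero.mpr (by omega : N + 2 ≤ 0)]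

theorem sigFrom_succ (N : ℤ) (hN : -2 ≤ N) :
    sigFrom X (N + 1) = column X (N + 1) ++ sigFrom X N := by
  rw [sigFrom_eq_flatten, sigFrom_eq_flatten, show (N + 1 + 2).toNat = (N + 2).toNat + 1 by omega,
    List.range_succ_eq_map, List.map_cons, List.map_map, List.flatten_cons]
  congr 2
  · simp
  · refine List.map_congr_left fun t _ => ?_
    simp only [Function.comp_apply]
    congr 1
    push_cast
    ring

theorem sigFrom_congr (N : ℤ) (h : ∀ j ≤ N, column X j = column Y j) :
    sigFrom X N = sigFrom Y N := by
  rw [sigFrom_eq_flatten, sigFrom_eq_flatten]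
  congr 1
  exact List.map_congr_left fun t _ => h (N - t) (by omega)

theorem sigFrom_eq_of_vanish {N : ℤ} (hX : ∀ j, N < j → X.1 j = 0 ∧ X.2 j = 0) {M : ℤ}
    (hNM : N ≤ M) : sigFrom X M = sigFrom X N := by
  induction M, hNM using Int.leInduction with
  | base => rfl
  | succ M hNM ih =>
    rcases le_or_gt (-2) M with hM | hM
    · obtain ⟨h1, h2⟩ := hX (M + 1) (by omega)
      rw [sigFrom_succ X M hM, column, h1, h2, ← ih]
      rfl
    · rw [← ih, sigFrom_of_le X _ (by omega), sigFrom_of_le X _ (by omega)]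

theorem sigOf_eq_sigFrom {N : ℤ} (hX : ∀ j, N ≤ j → X.1 j = 0 ∧ X.2 j = 0) :
    sigOf X = sigFrom X N := by
  have hN : ∃ N : ℤ, ∀ j, N ≤ j → X.1 j = 0 ∧ X.2 j = 0 := ⟨N, hX⟩
  rw [sigOf, dif_pos hN]
  rcases le_total hN.choose N with h | h
  · exact (sigFrom_eq_of_vanish X (fun j hj => hN.choose_spec j hj.le) h).symm
  · exact sigFrom_eq_of_vanish X (fun j hj => hX j hj.le) h

theorem pos_of_mem_sigFrom {N j : ℤ} (h : (true, j) ∈ sigFrom X N) : 0 < X.1 j := by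
  simp only [sigFrom_eq_flatten, List.mem_flatten, List.mem_map] at h
  obtain ⟨_, ⟨t, -, rfl⟩, h⟩ := h
  simp only [column, List.mem_append, List.mem_replicate, Prod.mk.injEq] at h
  grind

end Signature

section AddXkArr

variable (X : TwoRow) {k : ℤ} (m : ℕ)

theorem column_add_XkArr_succ : column (X + XkArr k m) (k + 1) =
    column X (k + 1) ++ List.replicate m (true, k + 1) := by
  simp [column, XkArr]

theorem column_add_XkArr_self : column (X + XkArr k m) k =
    List.replicate m (false, k) ++ column X k := by
  simp only [column, XkArr, Prod.snd_add, Prod.fst_add, Pi.add_apply, if_pos,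
    if_neg (show k ≠ k + 1 by omega), add_zero]
  rw [add_comm, ← List.replicate_append_replicate, List.append_assoc]

theorem column_add_XkArr_of_ne {j : ℤ} (hjk : j ≠ k) (hjk' : j ≠ k + 1) :
    column (X + XkArr k m) j = column X j := by
  simp [column, XkArr, hjk, hjk']

theorem foldl_redStep_sigFrom_add_XkArr (hk : -1 ≤ k) {N : ℤ} (hN : k + 1 ≤ N)
    (st : List (Bool × ℤ)) :
    (sigFrom (X + XkArr k m) N).foldl redStep st = (sigFrom X N).foldl redStep st := by
  induction N, hN using Int.leInduction generalizing st with
  | base =>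
    have hbelow : sigFrom (X + XkArr k m) (k - 1) = sigFrom X (k - 1) :=
      sigFrom_congr _ _ _ fun j hj => column_add_XkArr_of_ne X m (by omega) (by omega)
    have htwo : ∀ Y : TwoRow,
        sigFrom Y (k + 1) = column Y (k + 1) ++ (column Y k ++ sigFrom Y (k - 1)) := fun Y => by
      have h := sigFrom_succ Y (k - 1) (by omega)
      rw [sub_add_cancel] at h
      rw [sigFrom_succ Y k (by omega), h]
    rw [htwo, htwo, hbelow, column_add_XkArr_succ, column_add_XkArr_self]
    simp only [List.append_assoc]
    exact foldl_redStep_cancel _ _ _ _ _ _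
  | succ N hN ih =>
    rw [sigFrom_succ _ N (by omega), sigFrom_succ X N (by omega),
      column_add_XkArr_of_ne X m (by omega) (by omega), List.foldl_append, List.foldl_append, ih]

theorem redSig_add_XkArr (hX : ∃ N : ℤ, ∀ j, N ≤ j → X.1 j = 0 ∧ X.2 j = 0) (hk : -1 ≤ k) :
    redSig (X + XkArr k m) = redSig X := by
  obtain ⟨N, hN⟩ := hX
  have hN' : ∀ j, max N (k + 2) ≤ j → X.1 j = 0 ∧ X.2 j = 0 := fun j hj => hN j (by omega)
  have hNm : ∀ j, max N (k + 2) ≤ j → (X + XkArr k m).1 j = 0 ∧ (X + XkArr k m).2 j = 0 :=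
    fun j hj => by
      simp [XkArr, hN' j hj, show j ≠ k + 1 by omega, show j ≠ k by omega]
  rw [redSig, redSig, reduceSig, reduceSig, sigOf_eq_sigFrom _ hN', sigOf_eq_sigFrom _ hNm,
    foldl_redStep_sigFrom_add_XkArr X m hk (by omega)]

end AddXkArr

/-- `X - x_j(1) + y_j(1)`. -/
def moveBox (X : TwoRow) (j : ℤ) : TwoRow :=
  (fun i => if i = j then X.1 i - 1 else X.1 i, fun i => if i = j then X.2 i + 1 else X.2 i)

theorem ftilde_eq_map_moveBox (X : TwoRow) :
    ftilde X = ((redSig X).find? (·.1)).map fun c => moveBox X c.2 := by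
  unfold ftilde
  split <;> simp_all [moveBox]

theorem moveBox_add (X Y : TwoRow) {j : ℤ} (hj : 0 < X.1 j) :
    moveBox (X + Y) j = moveBox X j + Y := by
  ext i <;> by_cases h : i = j <;> simp [moveBox, h] <;> omega

theorem pos_of_find?_redSig {X : TwoRow} (hX : ∃ N : ℤ, ∀ j, N ≤ j → X.1 j = 0 ∧ X.2 j = 0)
    {c : Bool × ℤ} (hc : (redSig X).find? (·.1) = some c) : 0 < X.1 c.2 := by
  obtain ⟨N, hN⟩ := hX
  have hmem : c ∈ sigFrom X N :=
    sigOf_eq_sigFrom X hN ▸ reduceSig_subset _ (List.mem_of_find?_eq_some hc)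
  obtain ⟨b, j⟩ := c
  obtain rfl : b = true := List.find?_some hc
  exact pos_of_mem_sigFrom X hmem

/-- For every two-rowed array `X`, every `k ≥ −1` and every `a ∈ ℤ≥0`,
`f̃(X + X_k(2a)) = f̃(X) + X_k(2a)`, both sides being `0` if `f̃X = 0`. -/
theorem statement11 (X : TwoRow) (hX : X.Supported) (k : ℤ) (hk : -1 ≤ k) (a : ℕ) :
    ftilde (X + XkArr k (2 * a)) = (ftilde X).map (· + XkArr k (2 * a)) := by
  rw [ftilde_eq_map_moveBox, ftilde_eq_map_moveBox, redSig_add_XkArr X _ hX.2 hk, Option.map_map]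
  exact Option.map_congr fun c hc => moveBox_add X _ (pos_of_find?_redSig hX.2 hc)
end

section
/- If X is a reduced two-rowed array, then the reduced signatures of X and of F(X) coincide: σ̄(F(X)) = σ̄(X). -/
open scoped Classical

/-!
After all pairs `(+, −)` are cancelled, a signature becomes `−^a +^b`. Here `-a` is the
minimum of the walk that starts at level `0` and steps up at each `+` and down at each `−`,
and `b - a` is the level where the walk ends. The minimum is attained just after the `−`'s of
some column. `F` does not change the final level, because the tail sums of `x - y` change only
by even carries, which telescope. The level of `F(X)` after the `−`'s of column `m` equals the
level of `X` after column `m - 1`, corrected by `r(y_{m-1}) - r(X_m) ∈ {-1, 0, 1}`. A parity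
argument shows that this correction never goes below the minimum of `X`. At the last column
where `X` reaches its minimum, reducedness shows that `F(X)` reaches the same minimum.
-/

namespace TwoRow

/-- State `(a, b)`: `a` unmatched `−` followed by `b` unmatched `+`. -/
def countStep (p : ℕ × ℕ) : Bool → ℕ × ℕ
  | true => (p.1, p.2 + 1)
  | false => if p.2 = 0 then (p.1 + 1, 0) else (p.1, p.2 - 1)

lemma map_fst_redStep {α : Type} {st : List (Bool × α)} {a b : ℕ}
    (h : st.map Prod.fst = List.replicate b true ++ List.replicate a false) (c : Bool × α) :
    (redStep st c).map Prod.fst =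
      List.replicate (countStep (a, b) c.1).2 true ++
        List.replicate (countStep (a, b) c.1).1 false := by
  rcases c with ⟨_ | _, i⟩ <;> rcases st with _ | ⟨⟨_ | _, j⟩, st⟩ <;> rcases b with _ | b <;>
    rcases a with _ | a <;> simp_all [redStep, countStep, List.replicate_succ]

lemma map_fst_foldl_redStep {α : Type} (l : List (Bool × α)) {st : List (Bool × α)} {a b : ℕ}
    (h : st.map Prod.fst = List.replicate b true ++ List.replicate a false) :
    (l.foldl redStep st).map Prod.fst =
      List.replicate ((l.map Prod.fst).foldl countStep (a, b)).2 true ++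
        List.replicate ((l.map Prod.fst).foldl countStep (a, b)).1 false := by
  induction l generalizing st a b with
  | nil => exact h
  | cons c l ih => exact ih (map_fst_redStep h c)

lemma map_fst_reduceSig {α : Type} (l : List (Bool × α)) :
    (reduceSig l).map Prod.fst =
      List.replicate ((l.map Prod.fst).foldl countStep (0, 0)).1 false ++
        List.replicate ((l.map Prod.fst).foldl countStep (0, 0)).2 true := by
  rw [reduceSig, List.map_reverse, map_fst_foldl_redStep l (a := 0) (b := 0) rfl]
  simp

/-- The effect on the state of a column `−^y +^x`, given as `(y, x)`. -/
def columnStep (p c : ℕ × ℕ) : ℕ × ℕ := (p.1 + (c.1 - p.2), (p.2 - c.1) + c.2)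

lemma foldl_countStep_replicate_false (y : ℕ) (p : ℕ × ℕ) :
    (List.replicate y false).foldl countStep p = (p.1 + (y - p.2), p.2 - y) := by
  induction y generalizing p with
  | zero => simp
  | succ y ih =>
    rw [List.replicate_succ, List.foldl_cons, ih]
    unfold countStep
    split_ifs <;> ext <;> simp <;> omega

lemma foldl_countStep_replicate_true (x : ℕ) (p : ℕ × ℕ) :
    (List.replicate x true).foldl countStep p = (p.1, p.2 + x) := by
  induction x generalizing p with
  | zero => simp
  | succ x ih =>
    rw [List.replicate_succ, List.foldl_cons, ih, countStep, add_assoc, add_comm 1]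

lemma foldl_countStep_column (p c : ℕ × ℕ) :
    (List.replicate c.1 false ++ List.replicate c.2 true).foldl countStep p = columnStep p c := by
  rw [List.foldl_append, foldl_countStep_replicate_false, foldl_countStep_replicate_true]
  rfl

def columns (X : TwoRow) (N : ℤ) : List (ℕ × ℕ) :=
  (List.range (N + 2).toNat).map fun t : ℕ => (X.2 (N - t), X.1 (N - t))

lemma foldl_countStep_sigFrom (X : TwoRow) (N : ℤ) :
    ((sigFrom X N).map Prod.fst).foldl countStep (0, 0) =
      (columns X N).foldl columnStep (0, 0) := by
  simp only [sigFrom, columns, bind_pure_comp, List.map_eq_map, List.map_flatten,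
    List.foldl_flatten, List.map_map, List.foldl_map]
  congr 1
  funext p t
  simpa using foldl_countStep_column p (X.2 (N - t), X.1 (N - t))

/-- The lowest level reached by the walk that goes up by one at each `+` and down by one at
each `−` of the columns, read left to right from level `0`. -/
def walkMin : List (ℕ × ℕ) → ℤ
  | [] => 0
  | c :: cs => min (-c.1) (c.2 - c.1 + walkMin cs)

def walkNet (cs : List (ℕ × ℕ)) : ℤ := (cs.map fun c => (c.2 : ℤ) - c.1).sum

lemma walkMin_nonpos : ∀ cs : List (ℕ × ℕ), walkMin cs ≤ 0
  | [] => le_rfl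
  | c :: _ => (min_le_left _ _).trans (by simp)

lemma foldl_columnStep (cs : List (ℕ × ℕ)) (a b : ℕ) :
    cs.foldl columnStep (a, b) =
      (a + (-(b + walkMin cs)).toNat, (b + walkNet cs - min 0 (b + walkMin cs)).toNat) := by
  induction cs generalizing a b with
  | nil => simp [walkMin, walkNet]
  | cons c cs ih =>
    have := walkMin_nonpos cs
    rw [List.foldl_cons, columnStep, ih]
    simp only [walkMin, walkNet, List.map_cons, List.sum_cons] at *
    ext <;> simp <;> omega

lemma columns_of_le {X : TwoRow} {N : ℤ} (h : N ≤ -2) : columns X N = [] := by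
  simp [columns, show (N + 2).toNat = 0 by omega]

lemma columns_add_one (X : TwoRow) {N : ℤ} (h : -2 ≤ N) :
    columns X (N + 1) = (X.2 (N + 1), X.1 (N + 1)) :: columns X N := by
  rw [columns, show (N + 1 + 2).toNat = (N + 2).toNat + 1 by omega, List.range_succ_eq_map,
    List.map_cons, List.map_map, columns]
  congr 1
  · simp
  congr 1
  funext t
  simp only [Function.comp_apply, Nat.cast_succ, sub_add_eq_sub_sub, sub_right_comm _ _ (1 : ℤ),
    add_sub_cancel_right]

def VanishesFrom (X : TwoRow) (N : ℤ) : Prop := ∀ k, N ≤ k → X.1 k = 0 ∧ X.2 k = 0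

lemma VanishesFrom.mono {X : TwoRow} {N N' : ℤ} (h : X.VanishesFrom N) (hN : N ≤ N') :
    X.VanishesFrom N' := fun k hk => h k (hN.trans hk)

lemma foldl_columns_of_le {X : TwoRow} {N N' : ℤ} (hX : X.VanishesFrom (N + 1)) (hN : N ≤ N') :
    (columns X N').foldl columnStep (0, 0) = (columns X N).foldl columnStep (0, 0) := by
  induction N', hN using Int.leInduction with
  | base => rfl
  | succ M hM ih =>
    rcases lt_or_ge M (-2) with hM2 | hM2
    · rwa [columns_of_le (by omega)] at ih ⊢
    · obtain ⟨hx, hy⟩ := hX (M + 1) (by omega)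
      rw [columns_add_one X hM2, hx, hy, List.foldl_cons]
      exact ih

lemma foldl_columns_eq {X : TwoRow} {N N' : ℤ} (hX : X.VanishesFrom (N + 1))
    (hX' : X.VanishesFrom (N' + 1)) :
    (columns X N').foldl columnStep (0, 0) = (columns X N).foldl columnStep (0, 0) := by
  rcases le_total N N' with h | h
  · exact foldl_columns_of_le hX h
  · exact (foldl_columns_of_le hX' h).symm

lemma map_fst_redSig {X : TwoRow} {N : ℤ} (hX : X.VanishesFrom (N + 1)) :
    (redSig X).map Prod.fst =
      List.replicate ((columns X N).foldl columnStep (0, 0)).1 false ++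
        List.replicate ((columns X N).foldl columnStep (0, 0)).2 true := by
  have hex : ∃ N : ℤ, ∀ k : ℤ, N ≤ k → X.1 k = 0 ∧ X.2 k = 0 := ⟨N + 1, hX⟩
  rw [redSig, sigOf, dif_pos hex, map_fst_reduceSig, foldl_countStep_sigFrom,
    foldl_columns_eq hX (VanishesFrom.mono hex.choose_spec (by omega))]

def VanishesUpTo (X : TwoRow) (N : ℤ) : Prop := ∀ k, k ≤ N → X.1 k = 0 ∧ X.2 k = 0

noncomputable def tail (X : TwoRow) (N m : ℤ) : ℤ := ∑ j ∈ Finset.Ioc m N, ((X.1 j : ℤ) - X.2 j)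

/-- The level of the walk of `walkMin (columns X N)` just after the `−`'s of column `m`. -/
noncomputable def walk (X : TwoRow) (N m : ℤ) : ℤ := tail X N m - X.2 m

lemma tail_of_le {X : TwoRow} {N m : ℤ} (h : N ≤ m) : tail X N m = 0 := by
  simp [tail, Finset.Ioc_eq_empty_of_le h]

lemma tail_add_one_right (X : TwoRow) {N m : ℤ} (h : m ≤ N) :
    tail X (N + 1) m = tail X N m + (X.1 (N + 1) - X.2 (N + 1)) := by
  rw [tail, ← Finset.insert_Ioc_right_eq_Ioc_add_one h, Finset.sum_insert (by simp), add_comm]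
  rfl

lemma tail_sub_one {X : TwoRow} {N : ℤ} (hX : X.VanishesFrom (N + 1)) (m : ℤ) :
    tail X N (m - 1) = X.1 m - X.2 m + tail X N m := by
  rcases le_or_gt m N with h | h
  · rw [tail, ← Finset.insert_Ioc_left_eq_Ioc_sub_one h, Finset.sum_insert (by simp)]
    rfl
  · rw [tail_of_le (by omega), tail_of_le h.le, (hX m h).1, (hX m h).2]
    simp

lemma walk_sub_one {X : TwoRow} {N : ℤ} (hX : X.VanishesFrom (N + 1)) (m : ℤ) :
    walk X N (m - 1) = walk X N m + X.1 m - X.2 (m - 1) := by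
  rw [walk, walk, tail_sub_one hX]
  ring

lemma walkNet_columns (X : TwoRow) (N : ℤ) : walkNet (columns X N) = tail X N (-2) := by
  rcases lt_or_ge N (-2) with hN | hN
  · rw [columns_of_le hN.le, tail_of_le hN.le]
    rfl
  induction N, hN using Int.leInduction with
  | base => rfl
  | succ N hN ih =>
    rw [columns_add_one X hN, tail_add_one_right X hN, ← ih, walkNet, walkNet, List.map_cons,
      List.sum_cons]
    ring

lemma isLeast_walk_image {X : TwoRow} (hX : X.VanishesUpTo (-2)) {N : ℤ} (hN : -2 ≤ N) :
    IsLeast (walk X N '' Set.Iic N) (walkMin (columns X N)) := by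
  induction N, hN using Int.leInduction with
  | base =>
    have hzero : ∀ m ≤ -2, walk X (-2) m = 0 := fun m hm => by
      rw [walk, tail, Finset.sum_eq_zero fun j hj => by
        simp [(hX j (Finset.mem_Ioc.1 hj).2).1, (hX j (Finset.mem_Ioc.1 hj).2).2], (hX m hm).2]
      simp
    rw [columns_of_le le_rfl]
    refine ⟨⟨-2, Set.mem_Iic.2 le_rfl, hzero _ le_rfl⟩, ?_⟩
    rintro _ ⟨m, hm, rfl⟩
    exact (hzero m hm).ge
  | succ N hN ih =>
    have hshift : ∀ m ≤ N, walk X (N + 1) m = walk X N m + (X.1 (N + 1) - X.2 (N + 1)) :=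
      fun m hm => by rw [walk, walk, tail_add_one_right X hm]; ring
    have htop : walk X (N + 1) (N + 1) = -X.2 (N + 1) := by simp [walk, tail_of_le]
    obtain ⟨⟨m₀, hm₀, hm₀eq⟩, hlb⟩ := ih
    rw [columns_add_one X hN, walkMin]
    constructor
    · rcases min_choice (-(X.2 (N + 1) : ℤ)) (X.1 (N + 1) - X.2 (N + 1) + walkMin (columns X N))
        with h | h <;> rw [h]
      · exact ⟨N + 1, Set.mem_Iic.2 le_rfl, htop⟩
      · exact ⟨m₀, by simp at hm₀ ⊢; omega, by rw [hshift m₀ hm₀, hm₀eq]; ring⟩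
    · rintro _ ⟨m, hm, rfl⟩
      rcases eq_or_lt_of_le (Set.mem_Iic.1 hm) with rfl | hlt
      · rw [htop]
        exact min_le_left _ _
      · have := hlb ⟨m, Int.le_of_lt_add_one hlt, rfl⟩
        rw [hshift m (Int.le_of_lt_add_one hlt)]
        exact (min_le_right _ _).trans (by omega)

lemma isLeast_walk_range {X : TwoRow} (hX : X.VanishesUpTo (-2)) {N : ℤ} (hN : -2 ≤ N)
    (hX' : X.VanishesFrom (N + 1)) :
    IsLeast (Set.range (walk X N)) (walkMin (columns X N)) := by
  obtain ⟨⟨m, -, hm⟩, hlb⟩ := isLeast_walk_image hX hN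
  refine ⟨⟨m, hm⟩, ?_⟩
  rintro _ ⟨m, rfl⟩
  rcases le_or_gt m N with h | h
  · exact hlb ⟨m, h, rfl⟩
  · rw [walk, tail_of_le h.le, (hX' m h).2]
    simpa using walkMin_nonpos _

lemma zS_eq (X : TwoRow) (k : ℤ) :
    zS X k = min (X.1 k) (X.2 k % 2 + 2 * (X.2 (k - 1) / 2)) := rfl

variable {X : TwoRow} {N : ℤ}

lemma zS_of_fst_eq_zero {k : ℤ} (h : X.1 k = 0) : zS X k = 0 := by
  simp [zS, h]

lemma XS_of_fst_eq_zero {k : ℤ} (h : X.1 k = 0) (h' : X.1 (k - 1) = 0) : XS X k = 0 := by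
  simp [XS, h, zS_of_fst_eq_zero h, zS_of_fst_eq_zero h']

lemma Fop_vanishesUpTo (hX : X.VanishesUpTo (-2)) : (Fop X).VanishesUpTo (-2) := by
  intro k hk
  have hXS : ∀ j ≤ -2, XS X j = 0 := fun j hj =>
    XS_of_fst_eq_zero (hX j hj).1 (hX (j - 1) (by omega)).1
  simp [Fop, rH, qH, hXS k hk, hXS (k - 1) (by omega), (hX k hk).2, (hX (k - 1) (by omega)).2,
    zS_of_fst_eq_zero (hX k hk).1, zS_of_fst_eq_zero (hX (k - 1) (by omega)).1]

lemma Fop_vanishesFrom (hX : X.VanishesFrom N) : (Fop X).VanishesFrom (N + 2) := by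
  intro k hk
  have hXS : ∀ j ≥ N + 1, XS X j = 0 := fun j hj =>
    XS_of_fst_eq_zero (hX j (by omega)).1 (hX (j - 1) (by omega)).1
  simp [Fop, rH, qH, hXS k (by omega), hXS (k - 1) (by omega), (hX k (by omega)).2,
    (hX (k - 1) (by omega)).2, zS_of_fst_eq_zero (hX k (by omega)).1,
    zS_of_fst_eq_zero (hX (k - 1) (by omega)).1]

lemma tail_Fop (hX : X.VanishesFrom N) (m : ℤ) :
    tail (Fop X) (N + 1) m = tail X (N + 1) m + 2 * qH (XS X m) - 2 * qH (X.2 m) := by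
  have htop : ∀ m ≥ N + 1,
      tail (Fop X) (N + 1) m = tail X (N + 1) m + 2 * qH (XS X m) - 2 * qH (X.2 m) := by
    intro m hm
    rw [tail_of_le hm, tail_of_le hm, XS_of_fst_eq_zero (hX m (by omega)).1
      (hX (m - 1) (by omega)).1, (hX m (by omega)).2]
    rfl
  rcases le_total (N + 1) m with hm | hm
  · exact htop m hm
  induction m, hm using Int.leInductionDown with
  | base => exact htop _ le_rfl
  | pred m hm ih =>
    rw [tail_sub_one ((Fop_vanishesFrom hX).mono (by omega)), tail_sub_one (hX.mono (by omega)),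
      ih]
    have hx : (Fop X).1 m = rH (XS X m) + 2 * qH (XS X (m - 1)) := rfl
    have hy : (Fop X).2 m = rH (X.2 m) + 2 * qH (X.2 (m - 1)) - zS X m + zS X (m - 1) := rfl
    have hXS : XS X m = X.1 m - zS X m + zS X (m - 1) := rfl
    have := zS_eq X m
    simp only [rH, qH] at *
    omega

lemma walk_Fop (hX : X.VanishesFrom N) (m : ℤ) :
    walk (Fop X) (N + 1) m = walk X (N + 1) (m - 1) + rH (X.2 (m - 1)) - rH (XS X m) := by
  rw [walk, walk, tail_Fop hX, tail_sub_one (hX.mono (by omega))]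
  have hy : (Fop X).2 m = rH (X.2 m) + 2 * qH (X.2 (m - 1)) - zS X m + zS X (m - 1) := rfl
  have hXS : XS X m = X.1 m - zS X m + zS X (m - 1) := rfl
  have := zS_eq X m
  simp only [rH, qH] at *
  omega

lemma le_walk_Fop (hX : X.VanishesFrom N) {μ : ℤ}
    (hμ : μ ∈ lowerBounds (Set.range (walk X (N + 1)))) (m : ℤ) :
    μ ≤ walk (Fop X) (N + 1) m := by
  have hX' : X.VanishesFrom (N + 1 + 1) := hX.mono (by omega)
  have hF := walk_Fop hX m
  have hm := walk_sub_one hX' m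
  have hm1 := walk_sub_one hX' (m - 1)
  have := hμ ⟨m, rfl⟩
  have := hμ ⟨m - 1, rfl⟩
  have := hμ ⟨m - 1 - 1, rfl⟩
  have hXS : XS X m = X.1 m - zS X m + zS X (m - 1) := rfl
  have := zS_eq X m
  have := zS_eq X (m - 1)
  simp only [rH] at *
  -- Otherwise `walk X (m - 1)` is minimal with `y_{m-1}` even, so `z_m = x_m` and
  -- `X_m = z_{m-1} = 2 q(y_{m-2})` is even.
  omega

lemma exists_walk_Fop_le (hX : X.VanishesFrom N) (hred : X.Reduced) {μ : ℤ}
    (hμ : IsLeast (Set.range (walk X (N + 1))) μ) : ∃ m, walk (Fop X) (N + 1) m ≤ μ := by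
  have hX' : X.VanishesFrom (N + 1 + 1) := hX.mono (by omega)
  have hwalk_top : ∀ m ≥ N + 1, walk X (N + 1) m = 0 := fun m hm => by
    simp [walk, tail_of_le hm, (hX m (by omega)).2]
  have hμ0 : μ ≤ 0 := hwalk_top (N + 1) le_rfl ▸ hμ.2 ⟨N + 1, rfl⟩
  rcases hμ0.eq_or_lt with rfl | hμneg
  · exact ⟨N + 1, by simp [walk, tail_of_le]⟩
  obtain ⟨m₀, hm₀, hmax⟩ := Int.exists_greatest_of_bdd (P := fun m => walk X (N + 1) m = μ)
    ⟨N + 1, fun m hm => by by_contra h; rw [hwalk_top m (by omega)] at hm; omega⟩ hμ.1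
  have hnext : μ < walk X (N + 1) (m₀ + 1) :=
    (hμ.2 ⟨_, rfl⟩).lt_of_ne fun h => by have := hmax _ h.symm; omega
  have hprev := hμ.2 ⟨m₀ - 1, rfl⟩
  have hstep := walk_sub_one hX' (m₀ + 1)
  have hstep' := walk_sub_one hX' m₀
  have hred₀ := hred m₀
  have hred₁ := hred (m₀ - 1)
  have hXS : XS X (m₀ + 1) = X.1 (m₀ + 1) - zS X (m₀ + 1) + zS X m₀ := by
    simp [XS]
  have := zS_eq X m₀
  have := zS_eq X (m₀ + 1)
  simp only [add_sub_cancel_right, sub_add_cancel] at *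
  by_cases hpar : rH (X.2 m₀) = 1 ∧ rH (XS X (m₀ + 1)) = 0
  · -- `x_{m₀+1} < y_{m₀}` gives `X_{m₀+1} = z_{m₀}`, and reducedness at `m₀ - 1` makes
    -- `z_{m₀} = min x_{m₀} 1`; evenness forces `x_{m₀} = y_{m₀-1} = 0`.
    refine ⟨m₀, ?_⟩
    rw [walk_Fop hX]
    simp only [rH] at *
    omega
  · refine ⟨m₀ + 1, ?_⟩
    rw [walk_Fop hX, add_sub_cancel_right, hm₀]
    simp only [rH] at *
    omega

lemma walkMin_columns_Fop (hlow : X.VanishesUpTo (-2)) (hX : X.VanishesFrom N) (hN : -3 ≤ N)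
    (hred : X.Reduced) :
    walkMin (columns (Fop X) (N + 1)) = walkMin (columns X (N + 1)) := by
  have hμ := isLeast_walk_range hlow (N := N + 1) (by omega) (hX.mono (by omega))
  refine (isLeast_walk_range (Fop_vanishesUpTo hlow) (by omega)
    ((Fop_vanishesFrom hX).mono (by omega))).unique ⟨?_, ?_⟩
  · obtain ⟨m, hm⟩ := exists_walk_Fop_le hX hred hμ
    exact ⟨m, le_antisymm hm (le_walk_Fop hX hμ.2 m)⟩
  · rintro _ ⟨m, rfl⟩
    exact le_walk_Fop hX hμ.2 m

lemma walkNet_columns_Fop (hlow : X.VanishesUpTo (-2)) (hX : X.VanishesFrom N) :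
    walkNet (columns (Fop X) (N + 1)) = walkNet (columns X (N + 1)) := by
  rw [walkNet_columns, walkNet_columns, tail_Fop hX,
    XS_of_fst_eq_zero (hlow (-2) le_rfl).1 (hlow _ (by norm_num)).1, (hlow (-2) le_rfl).2]
  simp [qH]

end TwoRow

/-- If `X` is a reduced two-rowed array, then the reduced signatures (as `±`-sequences,
i.e. forgetting the annotations) of `X` and of `F(X)` coincide: `σ̄(F(X)) = σ̄(X)`. -/
theorem statement12 (X : TwoRow) (hX : X.Supported) (hred : X.Reduced) :
    (redSig (Fop X)).map Prod.fst = (redSig X).map Prod.fst := by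
  obtain ⟨hlow, N, hN⟩ := hX
  set M := max N (-3)
  have hM : X.VanishesFrom M := TwoRow.VanishesFrom.mono hN (le_max_left _ _)
  rw [TwoRow.map_fst_redSig (N := M + 1) ((TwoRow.Fop_vanishesFrom hM).mono (by omega)),
    TwoRow.map_fst_redSig (N := M + 1) (hM.mono (by omega)), TwoRow.foldl_columnStep,
    TwoRow.foldl_columnStep, TwoRow.walkMin_columns_Fop hlow hM (le_max_right _ _) hred,
    TwoRow.walkNet_columns_Fop hlow hM]
end

section
/- Every two-rowed array X of non-negative integers can be written as X = X' + Σ_{k ≥ −1} X_k(2a_k) for some non-negative integers a_k (all but finitely many zero) and a reduced two-rowed array X'; moreover the reduced array X' (and hence each a_k) is uniquely determined by X. -/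
lemma sum_XkArr_fst (s : Finset ℤ) (b : ℤ → ℕ) (j : ℤ) :
    (∑ k ∈ s, XkArr k (b k)).1 j = if j - 1 ∈ s then b (j-1) else 0 := by
  rw [Prod.fst_sum, Finset.sum_apply]
  rw [Finset.sum_congr rfl (g := fun k => if k = j - 1 then b k else 0)
    (fun k _ => by simp only [XkArr]; congr 1; · simp; omega)]
  simp [Finset.sum_ite_eq']

lemma sum_XkArr_snd (s : Finset ℤ) (b : ℤ → ℕ) (j : ℤ) :
    (∑ k ∈ s, XkArr k (b k)).2 j = if j ∈ s then b j else 0 := by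
  rw [Prod.snd_sum, Finset.sum_apply]
  simp [XkArr, eq_comm, Finset.sum_ite_eq']

/-- Every two-rowed array `X` can be written as `X = X' + Σ_{k ≥ -1} X_k(2a_k)` with `X'` a
reduced two-rowed array, and the reduced part `X'` is uniquely determined by `X`. -/
theorem statement15 (X : TwoRow) (hX : X.Supported) :
    ∃ (X' : TwoRow) (s : Finset ℤ) (a : ℤ → ℕ),
      X'.Supported ∧ X'.Reduced ∧ (∀ k ∈ s, -1 ≤ k) ∧
      X = X' + ∑ k ∈ s, XkArr k (2 * a k) ∧
      ∀ (X'' : TwoRow) (s' : Finset ℤ) (a' : ℤ → ℕ),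
        X''.Supported → X''.Reduced → (∀ k ∈ s', -1 ≤ k) →
        X = X'' + ∑ k ∈ s', XkArr k (2 * a' k) → X'' = X' := by
  obtain ⟨hlow, N, hN⟩ := hX
  set a : ℤ → ℕ := fun k => min (X.1 (k+1)) (X.2 k) / 2 with ha
  set X' : TwoRow := (fun j => X.1 j - 2 * a (j-1), fun j => X.2 j - 2 * a j) with hX'
  have ha0 : ∀ k : ℤ, X.2 k = 0 → a k = 0 := by intro k h; simp [ha, h]
  refine ⟨X', Finset.Icc (-1) N, a, ⟨?_, N, ?_⟩, ?_, ?_, ?_, ?_⟩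
  · intro k hk
    obtain ⟨h1, h2⟩ := hlow k hk
    simp only [hX', h1, h2]
    omega
  · intro k hk
    obtain ⟨h1, h2⟩ := hN k hk
    simp only [hX', h1, h2]
    omega
  · intro k
    simp only [hX', ha]
    have : k + 1 - 1 = k := by omega
    rw [this]
    omega
  · intro k hk
    exact (Finset.mem_Icc.mp hk).1
  · -- the decomposition
    refine Prod.ext (funext fun j => ?_) (funext fun j => ?_)
    · have := sum_XkArr_fst (Finset.Icc (-1) N) (fun k => 2 * a k) j
      show X.1 j = X'.1 j + _
      rw [this]
      simp only [hX', Finset.mem_Icc]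
      split
      · have h2 : 2 * a (j-1) ≤ X.1 j := by
          have : j - 1 + 1 = j := by omega
          simp only [ha, this]; omega
        omega
      · rename_i h
        have : a (j - 1) = 0 := by
          rcases (by omega : j - 1 < -1 ∨ N < j - 1) with h' | h'
          · exact ha0 _ (hlow _ (by omega)).2
          · exact ha0 _ (hN _ (by omega)).2
        simp [this]
    · have := sum_XkArr_snd (Finset.Icc (-1) N) (fun k => 2 * a k) j
      show X.2 j = X'.2 j + _
      rw [this]
      simp only [hX', Finset.mem_Icc]
      split
      · have h2 : 2 * a j ≤ X.2 j := by simp only [ha]; omega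
        omega
      · rename_i h
        have : a j = 0 := by
          rcases (by omega : j < -1 ∨ N < j) with h' | h'
          · exact ha0 _ (hlow _ (by omega)).2
          · exact ha0 _ (hN _ (by omega)).2
        simp [this]
  · -- uniqueness
    intro X'' s' a' hsupp hred hge heq
    set b : ℤ → ℕ := fun k => if k ∈ s' then 2 * a' k else 0 with hb
    have hx : ∀ j : ℤ, X.1 j = X''.1 j + b (j - 1) := by
      intro j
      have := congrArg (fun T : TwoRow => T.1 j) heq
      simpa [sum_XkArr_fst s' (fun k => 2 * a' k) j, hb] using this
    have hy : ∀ j : ℤ, X.2 j = X''.2 j + b j := by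
      intro j
      have := congrArg (fun T : TwoRow => T.2 j) heq
      simpa [sum_XkArr_snd s' (fun k => 2 * a' k) j, hb] using this
    have hbeq : ∀ k : ℤ, b k = 2 * a k := by
      intro k
      have hr := hred k
      have h1 := hx (k + 1)
      have h2 := hy k
      have hbe : ∃ c, b k = 2 * c := by
        simp only [hb]; split
        · exact ⟨a' k, rfl⟩
        · exact ⟨0, rfl⟩
      obtain ⟨c, hc⟩ := hbe
      have hk1 : k + 1 - 1 = k := by omega
      rw [hk1] at h1
      simp only [ha]
      omega
    refine Prod.ext (funext fun j => ?_) (funext fun j => ?_)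
    · have := hx j
      rw [hbeq (j - 1)] at this
      simp only [hX']
      omega
    · have := hy j
      rw [hbeq j] at this
      simp only [hX']
      omega
end

section
/- With notation as in the context, the pair (L₁ ⊗_{A₀} L₂, B₁ ⊗ B₂) is a crystal base of the B-module V₁ ⊗ V₂, and the crystal operators on B₁ ⊗ B₂ are given by the tensor rule: if a + b > 0, then ẽ(b₁ ⊗ b₂) = (ẽb₁) ⊗ b₂ and f̃(b₁ ⊗ b₂) = (f̃b₁) ⊗ b₂; if a = b = 0, then ẽ(b₁ ⊗ b₂) = b₁ ⊗ (ẽb₂) and f̃(b₁ ⊗ b₂) = b₁ ⊗ (f̃b₂). -/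
noncomputable section

open scoped TensorProduct

/-- `𝕜 = ℚ(q)`, the field of rational functions in `q` over `ℚ`. -/
abbrev KK : Type := RatFunc ℚ

/-- the variable `q`. -/
def qq : KK := RatFunc.X

/-- `A₀ ⊂ 𝕜`: the subring of rational functions regular at `q = 0`. -/
def A0 : Subring KK where
  carrier := {f | ∃ p r : Polynomial ℚ, Polynomial.eval 0 r ≠ 0 ∧
      f * algebraMap (Polynomial ℚ) KK r = algebraMap (Polynomial ℚ) KK p}
  zero_mem' := ⟨0, 1, by simp, by simp⟩
  one_mem' := ⟨1, 1, by simp, by simp⟩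
  add_mem' := by
    rintro a b ⟨p₁, r₁, h₁, e₁⟩ ⟨p₂, r₂, h₂, e₂⟩
    refine ⟨p₁ * r₂ + p₂ * r₁, r₁ * r₂, by simp [h₁, h₂], ?_⟩
    have key : (a + b) * algebraMap (Polynomial ℚ) KK (r₁ * r₂) =
        (a * algebraMap (Polynomial ℚ) KK r₁) * algebraMap (Polynomial ℚ) KK r₂ +
          (b * algebraMap (Polynomial ℚ) KK r₂) * algebraMap (Polynomial ℚ) KK r₁ := by
      rw [map_mul]; ring
    rw [key, e₁, e₂, map_add, map_mul, map_mul]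
  mul_mem' := by
    rintro a b ⟨p₁, r₁, h₁, e₁⟩ ⟨p₂, r₂, h₂, e₂⟩
    refine ⟨p₁ * p₂, r₁ * r₂, by simp [h₁, h₂], ?_⟩
    calc a * b * algebraMap (Polynomial ℚ) KK (r₁ * r₂)
        = (a * algebraMap (Polynomial ℚ) KK r₁) * (b * algebraMap (Polynomial ℚ) KK r₂) := by
          rw [map_mul]; ring
      _ = _ := by rw [e₁, e₂, map_mul]
  neg_mem' := by
    rintro a ⟨p, r, h, e⟩
    exact ⟨-p, r, h, by rw [map_neg, neg_mul, e]⟩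

/-- the quantum integer `[s] = (q^s − q^{−s})/(q − q^{−1})`. -/
def bq (s : ℕ) : KK := (qq ^ s - qq⁻¹ ^ s) / (qq - qq⁻¹)

/-- `u₀ = (1,0)` and `u₁ = (0,1)`, the standard basis of `𝕜 ⊕ 𝕜` (used both for `V₁`
when `a + b > 0` and for `V₂ = 𝕜w₀ ⊕ 𝕜w₁`). -/
def u0 : KK × KK := (1, 0)

def u1 : KK × KK := (0, 1)

/-- the action of `e` on `V₁` (`a + b > 0`): `e u₀ = 0`, `e u₁ = [a+b] u₀`. -/
def E1 (s : ℕ) : KK × KK →ₗ[KK] KK × KK :=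
  LinearMap.inl KK KK KK ∘ₗ (bq s • LinearMap.snd KK KK KK)

/-- the action of `f` on `V₁` (`a + b > 0`): `f u₀ = u₁`, `f u₁ = 0`. -/
def F1 : KK × KK →ₗ[KK] KK × KK := LinearMap.inr KK KK KK ∘ₗ LinearMap.fst KK KK KK

/-- the action of `k` on `V₁` (`a + b > 0`): multiplication by `q^{a+b}`. -/
def K1 (s : ℕ) : KK × KK →ₗ[KK] KK × KK := qq ^ s • LinearMap.id

/-- the action of `e'` on `V₂`: `e' w₀ = 0`, `e' w₁ = w₀`. -/
def E2 : KK × KK →ₗ[KK] KK × KK := LinearMap.inl KK KK KK ∘ₗ LinearMap.snd KK KK KK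

/-- the action of `f` on `V₂`: `f w₀ = w₁`, `f w₁ = 0`. -/
def F2 : KK × KK →ₗ[KK] KK × KK := LinearMap.inr KK KK KK ∘ₗ LinearMap.fst KK KK KK

/-- `V₁ ⊗ V₂` in the case `a + b > 0`. -/
abbrev VV : Type := (KK × KK) ⊗[KK] (KK × KK)

/-- `V₁ ⊗ V₂` in the case `a = b = 0` (where `V₁ = 𝕜 u₀` is one-dimensional). -/
abbrev V0 : Type := KK ⊗[KK] (KK × KK)

/-- `f̃` on `V₁ ⊗ V₂`: the action of `f` via `Δ(f) = f ⊗ 1 + k ⊗ f` (case `a + b > 0`). -/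
def Ft (s : ℕ) : VV →ₗ[KK] VV :=
  TensorProduct.map F1 LinearMap.id + TensorProduct.map (K1 s) F2

/-- `ẽ` on `V₁ ⊗ V₂`: the action of `e'` via
`Δ(e') = (q^{-1} - q)(k e) ⊗ 1 + k ⊗ e'` (case `a + b > 0`). -/
def Et (s : ℕ) : VV →ₗ[KK] VV :=
  (qq⁻¹ - qq) • TensorProduct.map (K1 s ∘ₗ E1 s) LinearMap.id +
    TensorProduct.map (K1 s) E2

/-- `f̃` on `V₁ ⊗ V₂` in the case `a = b = 0` (`k` acts by `1` and `e = f = 0` on `V₁`). -/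
def Ft0 : V0 →ₗ[KK] V0 := TensorProduct.map LinearMap.id F2

/-- `ẽ` on `V₁ ⊗ V₂` in the case `a = b = 0`. -/
def Et0 : V0 →ₗ[KK] V0 := TensorProduct.map LinearMap.id E2

/-- the vectors `u_i ⊗ w_j` (case `a + b > 0`). -/
def gV (i j : Fin 2) : VV := (if i = 0 then u0 else u1) ⊗ₜ[KK] (if j = 0 then u0 else u1)

/-- the lattice `L₁ ⊗_{A₀} L₂`, i.e. the `A₀`-span of the `u_i ⊗ w_j` (case `a + b > 0`). -/
def Lpos : Submodule A0 VV := Submodule.span A0 {x | ∃ i j : Fin 2, x = gV i j}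

/-- `q(L₁ ⊗_{A₀} L₂)` (case `a + b > 0`). -/
def qLpos : Submodule A0 VV := Submodule.span A0 {x | ∃ i j : Fin 2, x = qq • gV i j}

/-- the vectors `u₀ ⊗ w_j` (case `a = b = 0`). -/
def g0 (j : Fin 2) : V0 := (1 : KK) ⊗ₜ[KK] (if j = 0 then u0 else u1)

/-- the lattice `L₁ ⊗_{A₀} L₂` (case `a = b = 0`). -/
def L0 : Submodule A0 V0 := Submodule.span A0 {x | ∃ j : Fin 2, x = g0 j}

/-- `q(L₁ ⊗_{A₀} L₂)` (case `a = b = 0`). -/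
def qL0 : Submodule A0 V0 := Submodule.span A0 {x | ∃ j : Fin 2, x = qq • g0 j}

/-!
The vectors `u_i ⊗ w_j` form a `𝕜`-basis of `V₁ ⊗ V₂`, so `L₁ ⊗ L₂` is free and spans.
On this basis the coproduct formulas for `f` and `e'` have coefficients `1`, `q^{a+b}` and
`(q⁻¹ - q) q^{a+b} [a+b] = 1 - q^{2(a+b)}`, all in `A₀`, so the lattice is stable. When
`a + b > 0` every coefficient involving `k` vanishes modulo `q`, so the operators act on the
first tensor factor only; when `a = b = 0`, `V₁` is trivial and they act on the second.
-/

theorem Submodule.smul_mem_of_mem_subring {R M : Type*} [Ring R] [AddCommMonoid M] [Module R M]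
    {S : Subring R} (L : Submodule S M) {c : R} (hc : c ∈ S) {x : M} (hx : x ∈ L) :
    c • x ∈ L :=
  L.smul_mem ⟨c, hc⟩ hx

theorem Submodule.span_subring_le_comap {R M : Type*} [CommRing R] [AddCommMonoid M]
    [Module R M] {S : Subring R} (T : M →ₗ[R] M) {s : Set M}
    (hT : ∀ x ∈ s, T x ∈ Submodule.span S s) :
    Submodule.span S s ≤ (Submodule.span S s).comap (T.restrictScalars S) :=
  Submodule.span_le.mpr hT

theorem inv_sub_mul_pow_mul_qint {K : Type*} [Field K] {x : K} (hx : x - x⁻¹ ≠ 0) (s : ℕ) :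
    (x⁻¹ - x) * (x ^ s * ((x ^ s - x⁻¹ ^ s) / (x - x⁻¹))) = 1 - x ^ (2 * s) := by
  have hx0 : x ≠ 0 := by rintro rfl; simp at hx
  have hinv : x ^ s * x⁻¹ ^ s = 1 := by rw [← mul_pow, mul_inv_cancel₀ hx0, one_pow]
  calc (x⁻¹ - x) * (x ^ s * ((x ^ s - x⁻¹ ^ s) / (x - x⁻¹)))
      = -x ^ s * ((x ^ s - x⁻¹ ^ s) / (x - x⁻¹) * (x - x⁻¹)) := by ring
    _ = 1 - x ^ (2 * s) := by rw [div_mul_cancel₀ _ hx]; linear_combination hinv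

lemma qq_mem_A0 : qq ∈ A0 := ⟨Polynomial.X, 1, by simp, by simp [qq, RatFunc.algebraMap_X]⟩

lemma qq_sub_inv_ne_zero : qq - qq⁻¹ ≠ 0 := by
  have hq2 : qq ^ 2 ≠ 1 := by
    rw [qq, ← RatFunc.algebraMap_X, ← map_pow, ← map_one (algebraMap (Polynomial ℚ) KK),
      Ne, (RatFunc.algebraMap_injective ℚ).eq_iff]
    intro h
    simpa using congrArg Polynomial.natDegree h
  have hq : qq ≠ 0 := RatFunc.X_ne_zero
  intro h
  apply hq2
  field_simp at h
  linear_combination h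

lemma qq_inv_sub_mul_bq (s : ℕ) : (qq⁻¹ - qq) * (qq ^ s * bq s) = 1 - qq ^ (2 * s) :=
  inv_sub_mul_pow_mul_qint qq_sub_inv_ne_zero s

@[simp] lemma F1_u0 : F1 u0 = u1 := by simp [F1, u0, u1]
@[simp] lemma F1_u1 : F1 u1 = 0 := by simp [F1, u1]
@[simp] lemma F2_u0 : F2 u0 = u1 := by simp [F2, u0, u1]
@[simp] lemma F2_u1 : F2 u1 = 0 := by simp [F2, u1]
@[simp] lemma E1_u0 (s : ℕ) : E1 s u0 = 0 := by simp [E1, u0]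
@[simp] lemma E1_u1 (s : ℕ) : E1 s u1 = bq s • u0 := by simp [E1, u0, u1]
@[simp] lemma E2_u0 : E2 u0 = 0 := by simp [E2, u0]
@[simp] lemma E2_u1 : E2 u1 = u0 := by simp [E2, u0, u1]

lemma Ft_tmul (s : ℕ) (x y : KK × KK) :
    Ft s (x ⊗ₜ y) = F1 x ⊗ₜ y + (qq ^ s • x) ⊗ₜ F2 y := by
  simp [Ft, K1]

lemma Et_tmul (s : ℕ) (x y : KK × KK) :
    Et s (x ⊗ₜ y) = ((qq⁻¹ - qq) • qq ^ s • E1 s x) ⊗ₜ y + (qq ^ s • x) ⊗ₜ E2 y := by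
  simp [Et, K1, TensorProduct.smul_tmul']

lemma Ft_gV00 (s : ℕ) : Ft s (gV 0 0) = gV 1 0 + qq ^ s • gV 0 1 := by
  simp [gV, Ft_tmul, TensorProduct.smul_tmul']

lemma Ft_gV01 (s : ℕ) : Ft s (gV 0 1) = gV 1 1 := by
  simp [gV, Ft_tmul]

lemma Ft_gV10 (s : ℕ) : Ft s (gV 1 0) = qq ^ s • gV 1 1 := by
  simp [gV, Ft_tmul, TensorProduct.smul_tmul']

lemma Ft_gV11 (s : ℕ) : Ft s (gV 1 1) = 0 := by
  simp [gV, Ft_tmul]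

lemma Et_gV00 (s : ℕ) : Et s (gV 0 0) = 0 := by
  simp [gV, Et_tmul]

lemma Et_gV01 (s : ℕ) : Et s (gV 0 1) = qq ^ s • gV 0 0 := by
  simp [gV, Et_tmul, TensorProduct.smul_tmul']

lemma Et_gV10 (s : ℕ) : Et s (gV 1 0) = gV 0 0 - qq ^ (2 * s) • gV 0 0 := by
  simp [gV, Et_tmul, smul_smul, qq_inv_sub_mul_bq, sub_smul, TensorProduct.sub_tmul,
    TensorProduct.smul_tmul']

lemma Et_gV11 (s : ℕ) :
    Et s (gV 1 1) = gV 0 1 - qq ^ (2 * s) • gV 0 1 + qq ^ s • gV 1 0 := by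
  simp [gV, Et_tmul, smul_smul, qq_inv_sub_mul_bq, sub_smul, TensorProduct.sub_tmul,
    TensorProduct.smul_tmul']

lemma Ft0_g00 : Ft0 (g0 0) = g0 1 := by simp [Ft0, g0]
lemma Ft0_g01 : Ft0 (g0 1) = 0 := by simp [Ft0, g0]
lemma Et0_g00 : Et0 (g0 0) = 0 := by simp [Et0, g0]
lemma Et0_g01 : Et0 (g0 1) = g0 0 := by simp [Et0, g0]

def basisVV : Module.Basis (Fin 2 × Fin 2) KK VV :=
  (Module.Basis.finTwoProd KK).tensorProduct (Module.Basis.finTwoProd KK)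

lemma coe_basisVV : ⇑basisVV = fun p : Fin 2 × Fin 2 => gV p.1 p.2 := by
  ext ⟨i, j⟩ : 1
  fin_cases i <;> fin_cases j <;> simp [basisVV, gV, u0, u1]

def basisV0 : Module.Basis (Fin 2) KK V0 :=
  (Module.Basis.finTwoProd KK).map (TensorProduct.lid KK (KK × KK)).symm

lemma coe_basisV0 : ⇑basisV0 = g0 := by
  ext j : 1
  fin_cases j <;> simp [basisV0, g0, u0, u1]

lemma span_gV : Submodule.span KK {x | ∃ i j : Fin 2, x = gV i j} = ⊤ := by
  rw [← basisVV.span_eq, coe_basisVV]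
  congr 1
  ext x
  simp [eq_comm]

lemma span_g0 : Submodule.span KK {x | ∃ j : Fin 2, x = g0 j} = ⊤ := by
  rw [← basisV0.span_eq, coe_basisV0]
  congr 1
  ext x
  simp [eq_comm]

lemma linearIndependent_gV : LinearIndependent A0 fun p : Fin 2 × Fin 2 => gV p.1 p.2 :=
  coe_basisVV ▸ basisVV.linearIndependent.restrict_scalars' A0

lemma linearIndependent_g0 : LinearIndependent A0 fun j : Fin 2 => g0 j :=
  coe_basisV0 ▸ basisV0.linearIndependent.restrict_scalars' A0

lemma gV_mem_Lpos (i j : Fin 2) : gV i j ∈ Lpos := Submodule.subset_span ⟨i, j, rfl⟩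

lemma qq_pow_smul_gV_mem_Lpos (n : ℕ) (i j : Fin 2) : qq ^ n • gV i j ∈ Lpos :=
  Lpos.smul_mem_of_mem_subring (A0.pow_mem qq_mem_A0 n) (gV_mem_Lpos i j)

lemma qq_pow_smul_gV_mem_qLpos {n : ℕ} (hn : 0 < n) (i j : Fin 2) :
    qq ^ n • gV i j ∈ qLpos := by
  obtain ⟨m, rfl⟩ := Nat.exists_eq_add_of_lt hn
  rw [zero_add, pow_succ, mul_smul]
  exact qLpos.smul_mem_of_mem_subring (A0.pow_mem qq_mem_A0 m)
    (Submodule.subset_span ⟨i, j, rfl⟩)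

lemma map_mem_Lpos (T : VV →ₗ[KK] VV) (hT : ∀ i j, T (gV i j) ∈ Lpos) {x : VV}
    (hx : x ∈ Lpos) : T x ∈ Lpos :=
  Submodule.span_subring_le_comap T (by rintro _ ⟨i, j, rfl⟩; exact hT i j) hx

lemma Ft_mem_Lpos (s : ℕ) {x : VV} (hx : x ∈ Lpos) : Ft s x ∈ Lpos := by
  refine map_mem_Lpos _ (Fin.forall_fin_two.2 ⟨Fin.forall_fin_two.2 ⟨?_, ?_⟩,
    Fin.forall_fin_two.2 ⟨?_, ?_⟩⟩) hx
  · rw [Ft_gV00]; exact add_mem (gV_mem_Lpos 1 0) (qq_pow_smul_gV_mem_Lpos s 0 1)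
  · rw [Ft_gV01]; exact gV_mem_Lpos 1 1
  · rw [Ft_gV10]; exact qq_pow_smul_gV_mem_Lpos s 1 1
  · rw [Ft_gV11]; exact zero_mem _

lemma Et_mem_Lpos (s : ℕ) {x : VV} (hx : x ∈ Lpos) : Et s x ∈ Lpos := by
  refine map_mem_Lpos _ (Fin.forall_fin_two.2 ⟨Fin.forall_fin_two.2 ⟨?_, ?_⟩,
    Fin.forall_fin_two.2 ⟨?_, ?_⟩⟩) hx
  · rw [Et_gV00]; exact zero_mem _
  · rw [Et_gV01]; exact qq_pow_smul_gV_mem_Lpos s 0 0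
  · rw [Et_gV10]
    exact sub_mem (gV_mem_Lpos 0 0) (qq_pow_smul_gV_mem_Lpos _ 0 0)
  · rw [Et_gV11]
    exact add_mem (sub_mem (gV_mem_Lpos 0 1) (qq_pow_smul_gV_mem_Lpos _ 0 1))
      (qq_pow_smul_gV_mem_Lpos s 1 0)

lemma g0_mem_L0 (j : Fin 2) : g0 j ∈ L0 := Submodule.subset_span ⟨j, rfl⟩

lemma map_mem_L0 (T : V0 →ₗ[KK] V0) (hT : ∀ j, T (g0 j) ∈ L0) {x : V0} (hx : x ∈ L0) :
    T x ∈ L0 :=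
  Submodule.span_subring_le_comap T (by rintro _ ⟨j, rfl⟩; exact hT j) hx

lemma Ft0_mem_L0 {x : V0} (hx : x ∈ L0) : Ft0 x ∈ L0 :=
  map_mem_L0 _ (Fin.forall_fin_two.2 ⟨Ft0_g00 ▸ g0_mem_L0 1, Ft0_g01 ▸ zero_mem _⟩) hx

lemma Et0_mem_L0 {x : V0} (hx : x ∈ L0) : Et0 x ∈ L0 :=
  map_mem_L0 _ (Fin.forall_fin_two.2 ⟨Et0_g00 ▸ zero_mem _, Et0_g01 ▸ g0_mem_L0 0⟩) hx

/-- `(L₁ ⊗_{A₀} L₂, B₁ ⊗ B₂)` is a crystal base of the `B`-module `V₁ ⊗ V₂`, with the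
crystal operators on `B₁ ⊗ B₂` given by the tensor rule: if `a + b > 0` then
`f̃(b₁ ⊗ b₂) = (f̃b₁) ⊗ b₂` and `ẽ(b₁ ⊗ b₂) = (ẽb₁) ⊗ b₂`, while if `a = b = 0` then
`f̃(b₁ ⊗ b₂) = b₁ ⊗ (f̃b₂)` and `ẽ(b₁ ⊗ b₂) = b₁ ⊗ (ẽb₂)`.  The crystal base conditions
are stated elementwise: the lattice is free (the `u_i ⊗ w_j` are `A₀`-linearly
independent) and spans `V₁ ⊗ V₂` over `𝕜`, it is stable under `ẽ` and `f̃`, and modulo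
`q` times the lattice the operators act on the signed basis `B₁ ⊗ B₂` by the tensor
rule above. -/
theorem statement17 (a b : ℕ) :
    (0 < a + b →
      Submodule.span KK {x | ∃ i j : Fin 2, x = gV i j} = ⊤ ∧
      (LinearIndependent A0 fun p : Fin 2 × Fin 2 => gV p.1 p.2) ∧
      (∀ x ∈ Lpos, Ft (a + b) x ∈ Lpos ∧ Et (a + b) x ∈ Lpos) ∧
      Ft (a + b) (gV 0 0) - gV 1 0 ∈ qLpos ∧
      Ft (a + b) (gV 0 1) - gV 1 1 ∈ qLpos ∧
      Ft (a + b) (gV 1 0) ∈ qLpos ∧ Ft (a + b) (gV 1 1) ∈ qLpos ∧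
      Et (a + b) (gV 1 0) - gV 0 0 ∈ qLpos ∧
      Et (a + b) (gV 1 1) - gV 0 1 ∈ qLpos ∧
      Et (a + b) (gV 0 0) ∈ qLpos ∧ Et (a + b) (gV 0 1) ∈ qLpos) ∧
    (a + b = 0 →
      Submodule.span KK {x | ∃ j : Fin 2, x = g0 j} = ⊤ ∧
      (LinearIndependent A0 fun j : Fin 2 => g0 j) ∧
      (∀ x ∈ L0, Ft0 x ∈ L0 ∧ Et0 x ∈ L0) ∧
      Ft0 (g0 0) - g0 1 ∈ qL0 ∧ Ft0 (g0 1) ∈ qL0 ∧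
      Et0 (g0 1) - g0 0 ∈ qL0 ∧ Et0 (g0 0) ∈ qL0) := by
  refine ⟨fun hs => ?_, fun _ => ?_⟩
  · have hs2 : 0 < 2 * (a + b) := by omega
    refine ⟨span_gV, linearIndependent_gV, fun x hx => ⟨Ft_mem_Lpos _ hx, Et_mem_Lpos _ hx⟩,
      ?_, ?_, ?_, ?_, ?_, ?_, ?_, ?_⟩
    · rw [Ft_gV00, add_sub_cancel_left]; exact qq_pow_smul_gV_mem_qLpos hs 0 1
    · rw [Ft_gV01, sub_self]; exact zero_mem _
    · rw [Ft_gV10]; exact qq_pow_smul_gV_mem_qLpos hs 1 1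
    · rw [Ft_gV11]; exact zero_mem _
    · rw [Et_gV10, sub_sub_cancel_left]
      exact neg_mem (qq_pow_smul_gV_mem_qLpos hs2 0 0)
    · rw [Et_gV11, sub_add_comm, add_sub_cancel_right]
      exact sub_mem (qq_pow_smul_gV_mem_qLpos hs 1 0) (qq_pow_smul_gV_mem_qLpos hs2 0 1)
    · rw [Et_gV00]; exact zero_mem _
    · rw [Et_gV01]; exact qq_pow_smul_gV_mem_qLpos hs 0 0
  · refine ⟨span_g0, linearIndependent_g0, fun x hx => ⟨Ft0_mem_L0 hx, Et0_mem_L0 hx⟩,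
      ?_, ?_, ?_, ?_⟩ <;>
    simp [Ft0_g00, Ft0_g01, Et0_g00, Et0_g01]
end
end
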